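/- arXiv:1910.04459 — 5 statements merged into one kernel-verified Lean document; each statement's English description precedes it below -/
import Mathlib

section
/- Let A, B, C, D be finite multisets of integers. Then C = A↑B and D = B↑A hold simultaneously if and only if A = C↓D and B = D↓C hold simultaneously. -/
namespace MultisetUpDown

/-- `A ↑ B := (A ∖ B) ⊎ ((A ∩ B) + 1)` for finite multisets of integers -/
def up (A B : Multiset ℤ) : Multiset ℤ := (A - B) + (A ∩ B).map (· + 1)

/-- `A ↓ B := (A ∖ B) ⊎ ((A ∩ B) - 1)` for finite multisets of integers -/
def down (A B : Multiset ℤ) : Multiset ℤ := (A - B) + (A ∩ B).map (· - 1)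

lemma count_up (A B : Multiset ℤ) (n : ℤ) :
    (up A B).count n = (A.count n - B.count n) + min (A.count (n-1)) (B.count (n-1)) := by
  have hinj : Function.Injective (· + 1 : ℤ → ℤ) := fun x y h => by simpa using h
  have h : ((A ∩ B).map (· + 1)).count n = (A ∩ B).count (n - 1) := by
    have : n = (n - 1) + 1 := by ring
    rw [this, Multiset.count_map_eq_count' _ _ hinj]
    congr 1; ring
  simp [up, Multiset.count_sub, Multiset.count_inter, h]

lemma count_down (A B : Multiset ℤ) (n : ℤ) :
    (down A B).count n = (A.count n - B.count n) + min (A.count (n+1)) (B.count (n+1)) := by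
  have hinj : Function.Injective (· - 1 : ℤ → ℤ) := fun x y h => by simpa using h
  have h : ((A ∩ B).map (· - 1)).count n = (A ∩ B).count (n + 1) := by
    have : n = (n + 1) - 1 := by ring
    rw [this, Multiset.count_map_eq_count' _ _ hinj]
    congr 1; ring
  simp [down, Multiset.count_sub, Multiset.count_inter, h]

lemma down_up (A B : Multiset ℤ) : down (up A B) (up B A) = A := by
  ext n
  simp only [count_down, count_up, show n+1-1 = n from by ring, show n-1+1 = n from by ring]
  omega

lemma up_down (C D : Multiset ℤ) : up (down C D) (down D C) = C := by
  ext n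
  simp only [count_up, count_down, show n+1-1 = n from by ring, show n-1+1 = n from by ring]
  omega

/-- The operations `↑` and `↓` are mutually inverse:
`C = A↑B` and `D = B↑A` hold simultaneously iff `A = C↓D` and `B = D↓C` do. -/
theorem up_down_reversible (A B C D : Multiset ℤ) :
    (C = up A B ∧ D = up B A) ↔ (A = down C D ∧ B = down D C) := by
  constructor
  · rintro ⟨rfl, rfl⟩
    exact ⟨(down_up A B).symm, (down_up B A).symm⟩
  · rintro ⟨rfl, rfl⟩
    exact ⟨(up_down C D).symm, (up_down D C).symm⟩

end MultisetUpDown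
end

section
/- For finite multisets A, B of integers, (A↑B) ∩ (B↑A) = (A∩B)+1 and (A↑B) ∖ (B↑A) = A∖B. -/
namespace MultisetUpDown

/-- `(A↑B) ∩ (B↑A) = (A∩B) + 1` and `(A↑B) ∖ (B↑A) = A ∖ B`. -/
theorem up_inter_and_diff (A B : Multiset ℤ) :
    (up A B) ∩ (up B A) = (A ∩ B).map (· + 1) ∧ (up A B) - (up B A) = A - B := by
  constructor <;> ext n <;>
    simp only [up, Multiset.count_inter, Multiset.count_sub, Multiset.count_add,
      Multiset.inter_comm B A] <;> omega

end MultisetUpDown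
end

section
/- For all positive integers m, g and every partition μ with at most m parts, each part at most g, the map Ψ_{m,g} is a bijection from K(μ,m) onto SSOT_g(μ̂,m), and the crystal weight of T ∈ K(μ,m) equals the crystal weight of Ψ_{m,g}(T). -/
/-!
Encode the letters `i < ī` as `2i - 1 < 2i` and let `numLE T v c` be the number of entries
`≤ v` in column `c` of a King tableau `T`. By the King condition these entries lie in the
first `⌈v/2⌉` rows; complementing them in the `⌈v/2⌉ × g` rectangle and rotating by `180°`
gives a partition `coshape v`, with `coshape 0 = ∅` and `coshape (2m) = μ̂`. Columns being
strict, passing from `v` to `v + 1` changes each column of `coshape v` by at most one box: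
`coshape (2i) ⊆ coshape (2i+1)` grows exactly in the columns without the letter `i + 1`, and
`coshape (2i+1) ⊇ coshape (2i+2)` shrinks exactly in the columns containing `ī+1`. So these are
horizontal strips, and since an oscillating horizontal strip is determined by its inside, its
largest partition and its outside, `Ψ_{m,g}(T)` is the unique SSOT with these shapes.
Conversely the shapes of any `S ∈ SSOT_g(μ̂, m)` have the same interlacing, hence are the
coshapes of the King tableau whose entry in row `r` of column `c` is the least `v` with
`r < numLE v c`. Counting boxes column by column turns `g - |S^{(i)}|` into `#i - #ī`.
-/

open scoped Classical

namespace KingSSOT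

/-! ### Partitions -/

def zeroP : ℕ → ℕ := fun _ => 0

/-- `p` is a partition: weakly decreasing row lengths, eventually zero. -/
def IsPartition (p : ℕ → ℕ) : Prop :=
  (∀ i, p (i + 1) ≤ p i) ∧ ∃ N, p N = 0

/-- number of boxes of a partition -/
noncomputable def psize (p : ℕ → ℕ) : ℕ :=
  sSup (Set.range fun N => ∑ i ∈ Finset.range N, p i)

/-- length of the `j`-th column (columns indexed starting at 1) -/
noncomputable def colLen (p : ℕ → ℕ) (j : ℕ) : ℕ := sInf {r | p r < j}

/-! ### Oscillating horizontal strips -/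

/-- apply one step of a row sequence: a positive entry `r` adds a box in (1-indexed) row `r`,
a negative entry `-r` removes a box from row `r`. -/
def applyStep (p : ℕ → ℕ) (r : ℤ) : ℕ → ℕ := fun k =>
  if (k : ℤ) + 1 = r then p k + 1 else if (k : ℤ) + 1 = -r then p k - 1 else p k

/-- the sequence of partitions of an oscillating horizontal strip with given inside
and row sequence -/
def partsOf (p0 : ℕ → ℕ) (rows : List ℤ) : List (ℕ → ℕ) := rows.scanl applyStep p0

def outsideOf (p0 : ℕ → ℕ) (rows : List ℤ) : ℕ → ℕ := rows.foldl applyStep p0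

/-- the maximal partition `S_*` of an oscillating horizontal strip -/
def starOf (p0 : ℕ → ℕ) (rows : List ℤ) : ℕ → ℕ :=
  (rows.filter fun z => decide (0 < z)).foldl applyStep p0

/-- `q` is obtained from `p` by adding one box in (0-indexed) row `i` -/
def AddBox (p q : ℕ → ℕ) (i : ℕ) : Prop := q i = p i + 1 ∧ ∀ k, k ≠ i → q k = p k

def StepOK (p : ℕ → ℕ) (r : ℤ) : Prop :=
  (∃ i : ℕ, r = (i : ℤ) + 1 ∧ AddBox p (applyStep p r) i) ∨
  (∃ i : ℕ, r = -((i : ℤ) + 1) ∧ AddBox (applyStep p r) p i)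

/-- `(p0, rows)` encodes an oscillating horizontal strip: all intermediate shapes are
partitions, all steps genuinely add/remove one box, and the row numbers are weakly
decreasing. -/
def IsOHS (p0 : ℕ → ℕ) (rows : List ℤ) : Prop :=
  IsPartition p0 ∧ List.Chain' (· ≥ ·) rows ∧
  (∀ q ∈ partsOf p0 rows, IsPartition q) ∧
  ∀ k, k < rows.length → StepOK ((partsOf p0 rows).getD k zeroP) (rows.getD k 0)

/-- a list of partitions forms an oscillating horizontal strip -/
def IsOHSspan (l : List (ℕ → ℕ)) : Prop :=
  ∃ rows : List ℤ, IsOHS (l.headD zeroP) rows ∧ partsOf (l.headD zeroP) rows = l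

/-! ### (Skew) semistandard oscillating tableaux -/

/-- data of a (skew) semistandard oscillating tableau: for each `i`, the inside partition
and the row sequence of the `(i+1)`-st oscillating horizontal strip `T^{(i+1)}`. -/
structure SSOT where
  ins : ℕ → ℕ → ℕ
  rows : ℕ → List ℤ

def IsSSOT (T : SSOT) : Prop :=
  (∀ i, IsOHS (T.ins i) (T.rows i)) ∧
  (∀ i, T.ins (i + 1) = outsideOf (T.ins i) (T.rows i)) ∧
  ∃ N, ∀ i, N ≤ i → T.rows i = []

def OutsideIs (T : SSOT) (ν : ℕ → ℕ) : Prop := ∃ N, ∀ i, N ≤ i → T.ins i = ν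

/-- every partition occurring in `T` has at most `g` columns, i.e. `c(T) ≤ g` -/
def cBound (g : ℕ) (T : SSOT) : Prop :=
  ∀ i, ∀ q ∈ partsOf (T.ins i) (T.rows i), q 0 ≤ g

def wtOf (T : SSOT) : ℕ → ℕ := fun i => (T.rows i).length

/-- membership in `SSOT_g(ν, m)` with inside `lam` (`lam = zeroP` for honest SSOT) -/
def SSOTmem (g m : ℕ) (lam ν : ℕ → ℕ) (T : SSOT) : Prop :=
  IsSSOT T ∧ T.ins 0 = lam ∧ OutsideIs T ν ∧ (∀ i, m ≤ i → T.rows i = []) ∧ cBound g T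

/-- the crystal weight `(g - α_1, …, g - α_m)` of an element of `SSOT_g(ν,m)` -/
def cwt (g : ℕ) (T : SSOT) : ℕ → ℤ := fun i => (g : ℤ) - (T.rows i).length

/-- complement `μ̂` of `μ` in the `m × g` rectangle: `μ̂_i = g - μ_{m+1-i}` -/
def hatP (m g : ℕ) (μ : ℕ → ℕ) : ℕ → ℕ := fun i => if i < m then g - μ (m - 1 - i) else 0

/-! ### King tableaux -/

/-- A King tableau of shape `μ` for `Sp(2m)`.  The alphabet `1 < 1̄ < 2 < 2̄ < ⋯ < m < m̄`
is encoded by `i ↦ 2i-1`, `ī ↦ 2i`.  Rows and columns are 0-indexed. -/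
structure King (m : ℕ) (μ : ℕ → ℕ) where
  entry : ℕ → ℕ → ℕ
  rowsWeak : ∀ r c, c + 1 < μ r → entry r c ≤ entry r (c + 1)
  colsStrict : ∀ r c, c < μ (r + 1) → entry r c < entry (r + 1) c
  symplectic : ∀ r c, c < μ r → 2 * r + 1 ≤ entry r c
  upperBound : ∀ r c, c < μ r → entry r c ≤ 2 * m
  zeroOutside : ∀ r c, ¬ c < μ r → entry r c = 0

/-- `T` has an entry with value `v` somewhere in (0-indexed) column `c` -/
def hasEntry {m : ℕ} {μ : ℕ → ℕ} (T : King m μ) (c v : ℕ) : Prop :=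
  ∃ r, c < μ r ∧ T.entry r c = v

def countEntry (m g : ℕ) {μ : ℕ → ℕ} (T : King m μ) (v : ℕ) : ℕ :=
  ((Finset.range m ×ˢ Finset.range g).filter
    (fun rc => rc.2 < μ rc.1 ∧ T.entry rc.1 rc.2 = v)).card

/-- the crystal weight of a King tableau: `α_i = #(i) - #(ī)` (here `i` is 0-indexed). -/
def kingWt (m g : ℕ) {μ : ℕ → ℕ} (T : King m μ) : ℕ → ℤ :=
  fun i => (countEntry m g T (2 * i + 1) : ℤ) - countEntry m g T (2 * i + 2)

/-- The defining property of King's bijection `Ψ_{m,g}`: for each `i < m` (the strip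
`T^{(i+1)}` of `S`), the horizontal strip `S_*/inside` has no box in (1-indexed) column `j`
iff the letter `i+1` occurs in (0-indexed) column `g-j` of the King tableau, and
`S_*/outside` has a box in column `j` iff the letter `\overline{i+1}` occurs in column
`g-j`; moreover all partitions of the strips fit in `g` columns. -/
def PsiRel (m g : ℕ) {μ : ℕ → ℕ} (T : King m μ) (S : SSOT) : Prop :=
  ∀ i, i < m →
    (starOf (S.ins i) (S.rows i)) 0 ≤ g ∧
    ∀ j, 1 ≤ j → j ≤ g →
      ((colLen (starOf (S.ins i) (S.rows i)) j = colLen (S.ins i) j) ↔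
        hasEntry T (g - j) (2 * i + 1)) ∧
      ((colLen (starOf (S.ins i) (S.rows i)) j
          = colLen (outsideOf (S.ins i) (S.rows i)) j + 1) ↔
        hasEntry T (g - j) (2 * i + 2))



/-! ### Semistandard Young tableaux as lists of rows, Schensted insertion -/

/-- Schensted row insertion (row bumping) of a letter into a tableau:
bump the first entry strictly larger than the inserted letter. -/
def rowInsert : List (List ℕ) → ℕ → List (List ℕ)
  | [], a => [[a]]
  | r :: rest, a =>
    match r.findIdx? (fun x => decide (a < x)) with
    | none => (r ++ [a]) :: rest
    | some k => r.set k a :: rowInsert rest (r.getD k 0)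

def shapeOf (Q : List (List ℕ)) : ℕ → ℕ := fun r => (Q.getD r []).length

def sizeT (Q : List (List ℕ)) : ℕ := Q.flatten.length

/-- add the entry `x` at the end of (0-indexed) row `r` -/
def placeAt (Q : List (List ℕ)) (r x : ℕ) : List (List ℕ) :=
  if r < Q.length then Q.set r ((Q.getD r []) ++ [x]) else Q ++ [[x]]

def maxEntry (Q : List (List ℕ)) : ℕ := Q.flatten.foldr max 0

/-- remove the rightmost cell containing `x` (for `x` the largest entry of `Q`,
this is the last cell of the topmost row containing `x`). -/
def removeRM (x : ℕ) (Q : List (List ℕ)) : List (List ℕ) :=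
  let r := Q.findIdx (fun row => row.contains x)
  (Q.set r ((Q.getD r []).dropLast)).filter (fun row => !row.isEmpty)

/-- repeatedly (k times) remove the rightmost cell containing the current largest entry -/
def stripK : ℕ → List (List ℕ) → List (List ℕ)
  | 0, Q => Q
  | k + 1, Q => stripK k (removeRM (maxEntry Q) Q)

def getCol (Q : List (List ℕ)) (j : ℕ) : List ℕ := Q.filterMap (fun r => r[j]?)

def transposeT (Q : List (List ℕ)) : List (List ℕ) :=
  (List.range (Q.headD []).length).map (getCol Q)

/-- auxiliary "weak" row bumping (bump the first entry `≥ a`), used to define column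
insertion via transposition. -/
def rowInsertW : List (List ℕ) → ℕ → List (List ℕ)
  | [], a => [[a]]
  | r :: rest, a =>
    match r.findIdx? (fun x => decide (a ≤ x)) with
    | none => (r ++ [a]) :: rest
    | some k => r.set k a :: rowInsertW rest (r.getD k 0)

/-- Schensted column insertion of a letter into a semistandard tableau -/
def colInsert (Q : List (List ℕ)) (a : ℕ) : List (List ℕ) :=
  transposeT (rowInsertW (transposeT Q) a)

def IsSSYT (Q : List (List ℕ)) : Prop :=
  (∀ row ∈ Q, row ≠ [] ∧ List.Chain' (· ≤ ·) row) ∧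
  List.Chain' (· ≥ ·) (Q.map List.length) ∧
  (∀ r c, c < (Q.getD (r + 1) []).length →
    (Q.getD r []).getD c 0 < (Q.getD (r + 1) []).getD c 0)

/-! ### Matrices, two-line arrays, and column RSK -/

/-- the two-line array `w_M` of a matrix (`1`-indexed entries, support in `[1,n]²`):
top entries weakly increasing, bottom entries weakly decreasing within a fixed top entry. -/
def twoLine (M : ℕ → ℕ → ℕ) (n : ℕ) : List (ℕ × ℕ) :=
  (List.range n).flatMap fun i =>
    ((List.range n).reverse).flatMap fun j =>
      List.replicate (M (i + 1) (j + 1)) (i + 1, j + 1)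

/-- the `P`-tableau of column RSK: column-insert the bottom row of `w_M` -/
def PM (M : ℕ → ℕ → ℕ) (n : ℕ) : List (List ℕ) :=
  (twoLine M n).foldl (fun Q c => colInsert Q c.2) []

def trM (M : ℕ → ℕ → ℕ) : ℕ → ℕ → ℕ := fun p q => M q p

/-- the `Q`-tableau of column RSK: `Q(M) = P(Mᵀ)` -/
def Qm (M : ℕ → ℕ → ℕ) (n : ℕ) : List (List ℕ) := PM (trM M) n

def rowSumM (M : ℕ → ℕ → ℕ) (n i : ℕ) : ℕ := ∑ j ∈ Finset.range n, M i (j + 1)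

def suppIn (M : ℕ → ℕ → ℕ) (n : ℕ) : Prop :=
  ∀ p q, M p q ≠ 0 → 1 ≤ p ∧ p ≤ n ∧ 1 ≤ q ∧ q ≤ n

/-- membership in `M̂_m^g`: symmetric, even diagonal, `c(M) ≤ 2g` -/
def MhatMem (m g : ℕ) (M : ℕ → ℕ → ℕ) : Prop :=
  suppIn M m ∧ (∀ p q, M p q = M q p) ∧ (∀ p, 2 ∣ M p p) ∧
  ((PM M m).headD []).length ≤ 2 * g

/-! ### type-A crystal operators on tableaux -/

/-- row reading word with cell positions: rows top to bottom, right to left in each row -/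
def cellsOf (Q : List (List ℕ)) : List (ℕ × ℕ × ℕ) :=
  (Q.zipIdx.map Prod.swap).flatMap fun p => ((p.2.zipIdx.map Prod.swap).reverse).map fun q => (p.1, q.1, q.2)

/-- bracketing for letters `i, i+1` along the reading word.  Returns the positions of
unpaired letters `i+1` (chronological order) and the stack of unpaired `i`'s
(most recent first). -/
def pairState (i : ℕ) (cs : List (ℕ × ℕ × ℕ)) : List (ℕ × ℕ) × List (ℕ × ℕ) :=
  cs.foldl
    (fun st c =>
      if c.2.2 = i then (st.1, (c.1, c.2.1) :: st.2)
      else if c.2.2 = i + 1 then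
        match st.2 with
        | [] => (st.1 ++ [(c.1, c.2.1)], st.2)
        | _ :: t => (st.1, t)
      else st)
    ([], [])

def setCell (Q : List (List ℕ)) (r c v : ℕ) : List (List ℕ) :=
  Q.set r ((Q.getD r []).set c v)

/-- crystal operator `e_i` on semistandard tableaux: change the last unpaired `i+1` to `i` -/
def eT (i : ℕ) (Q : List (List ℕ)) : Option (List (List ℕ)) :=
  match (pairState i (cellsOf Q)).1.getLast? with
  | none => none
  | some rc => some (setCell Q rc.1 rc.2 i)

/-- crystal operator `f_i` on semistandard tableaux: change the first unpaired `i` to `i+1` -/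
def fT (i : ℕ) (Q : List (List ℕ)) : Option (List (List ℕ)) :=
  match (pairState i (cellsOf Q)).2.getLast? with
  | none => none
  | some rc => some (setCell Q rc.1 rc.2 (i + 1))

/-! ### operators `e_i^Q`, `e_i^P` on matrices -/

/-- bottom entries of the columns of `w_M` with top entry `i`, in weakly decreasing order -/
def rowListM (M : ℕ → ℕ → ℕ) (n i : ℕ) : List ℕ :=
  ((List.range n).reverse).flatMap fun j => List.replicate (M i (j + 1)) (j + 1)

/-- remove the first element `< q` from a weakly decreasing list (i.e. the largest one) -/
def removeLtNat (q : ℕ) : List ℕ → Option (List ℕ)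
  | [] => none
  | p :: t => if p < q then some t else (removeLtNat q t).map (p :: ·)

/-- pairing `(p, q)`, `p < q`, between the (decreasingly sorted) bottom entries of rows
`i` and `i+1`; returns (unpaired elements of `A`, unpaired elements of `B`),
both in decreasing order. -/
def pairRows (A B : List ℕ) : List ℕ × List ℕ :=
  B.foldl
    (fun st q =>
      match removeLtNat q st.1 with
      | some A' => (A', st.2)
      | none => (st.1, st.2 ++ [q]))
    (A, [])

def updM (M : ℕ → ℕ → ℕ) (a b v : ℕ) : ℕ → ℕ → ℕ :=
  fun p q => if p = a ∧ q = b then v else M p q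

/-- `e_i^Q`: replace the unpaired column `(i+1; b)` of `w_M` with largest `b` by `(i; b)` -/
def eQmat (M : ℕ → ℕ → ℕ) (n i : ℕ) : Option (ℕ → ℕ → ℕ) :=
  match (pairRows (rowListM M n i) (rowListM M n (i + 1))).2.head? with
  | none => none
  | some b => some (updM (updM M (i + 1) b (M (i + 1) b - 1)) i b (M i b + 1))

/-- `f_i^Q`: replace the unpaired column `(i; a)` of `w_M` with smallest `a` by `(i+1; a)` -/
def fQmat (M : ℕ → ℕ → ℕ) (n i : ℕ) : Option (ℕ → ℕ → ℕ) :=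
  match (pairRows (rowListM M n i) (rowListM M n (i + 1))).1.getLast? with
  | none => none
  | some a => some (updM (updM M i a (M i a - 1)) (i + 1) a (M (i + 1) a + 1))

def ePmat (M : ℕ → ℕ → ℕ) (n i : ℕ) : Option (ℕ → ℕ → ℕ) :=
  (eQmat (trM M) n i).map trM

def fPmat (M : ℕ → ℕ → ℕ) (n i : ℕ) : Option (ℕ → ℕ → ℕ) :=
  (fQmat (trM M) n i).map trM

/-- `ẽ_i = e_i^P ∘ e_i^Q` on matrices -/
def etM (M : ℕ → ℕ → ℕ) (n i : ℕ) : Option (ℕ → ℕ → ℕ) :=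
  (eQmat M n i).bind fun M' => ePmat M' n i

/-- `f̃_i = f_i^P ∘ f_i^Q` on matrices -/
def ftM (M : ℕ → ℕ → ℕ) (n i : ℕ) : Option (ℕ → ℕ → ℕ) :=
  (fQmat M n i).bind fun M' => fPmat M' n i


/-! ### Φ and local operators -/


/-- standardization: concatenate the partition sequences of the strips of `T`
(up to strip `N`), dropping repeated endpoints -/
def stdConcat (T : SSOT) (N : ℕ) : List (ℕ → ℕ) :=
  partsOf (T.ins 0) (T.rows 0) ++
    (List.range N).flatMap fun k => (partsOf (T.ins (k + 1)) (T.rows (k + 1))).tail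

/-- `β_i = α_1 + ⋯ + α_i` for `α = wt(T)` -/
def betaT (T : SSOT) (i : ℕ) : ℕ := ∑ k ∈ Finset.range i, (T.rows k).length

/-- the semistandardization value of the index `p ∈ [1, m']`:
the `i` with `β_{i-1} < p ≤ β_i` -/
noncomputable def vOf (T : SSOT) (p : ℕ) : ℕ := sInf {i | p ≤ betaT T i}

/-- the recording data of the reverse row-insertion procedure along the standardization
`lams`: `V p` are the recording tableaux, and `inv` records the involution pairs. -/
def PhiRec (lams : List (ℕ → ℕ)) (V : ℕ → List (List ℕ)) (inv : ℕ → ℕ) : Prop :=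
  V 0 = [] ∧
  ∀ p, p < lams.length - 1 →
    (∃ r, AddBox (lams.getD p zeroP) (lams.getD (p + 1) zeroP) r ∧
      V (p + 1) = placeAt (V p) r (p + 1)) ∨
    (∃ r j, AddBox (lams.getD (p + 1) zeroP) (lams.getD p zeroP) r ∧
      shapeOf (V (p + 1)) = lams.getD (p + 1) zeroP ∧
      rowInsert (V (p + 1)) j = V p ∧ inv (p + 1) = j ∧ inv j = p + 1)

/-- the graph of the map `Φ`: `M` is the semistandardization (with respect to `wt T`) of
the fixed-point-free involution `inv` produced by the reverse row-insertion recording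
procedure on the standardization of `T`. -/
def PhiRel (T : SSOT) (M : ℕ → ℕ → ℕ) : Prop :=
  ∃ (N : ℕ) (V : ℕ → List (List ℕ)) (inv : ℕ → ℕ),
    (∀ i, N ≤ i → T.rows i = []) ∧
    PhiRec (stdConcat T N) V inv ∧
    ∀ a b, M a b =
      ((Finset.Icc 1 ((stdConcat T N).length - 1)).filter
        (fun p => vOf T p = a ∧ vOf T (inv p) = b)).card

/-! ### the explicit local crystal operators on SSOT -/

def posM (l : List ℤ) : Multiset ℕ :=
  ↑(l.filterMap fun z => if 0 < z then some z.toNat else none)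

def negM (l : List ℤ) : Multiset ℕ :=
  ↑(l.filterMap fun z => if z < 0 then some (-z).toNat else none)

/-- `A ↑ B = (A \ B) ⊎ ((A ∩ B) + 1)` -/
def upM (A B : Multiset ℕ) : Multiset ℕ := (A - B) + (A ∩ B).map (· + 1)

/-- `A ↓ B = (A \ B) ⊎ ((A ∩ B) - 1)` -/
def downM (A B : Multiset ℕ) : Multiset ℕ := (A - B) + (A ∩ B).map (· - 1)

/-- the multiset `C_i(T) = r⁺(T^{(i)}) ⊎ (- r̄⁻(T^{(i)}))` (paper-indexed `i ≥ 1`) -/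
def Cmul (T : SSOT) (i : ℕ) : Multiset ℤ :=
  (posM (T.rows (i - 1))).map (fun n => (n : ℤ)) +
    (upM (negM (T.rows (i - 1))) (posM (T.rows i))).map (fun n => -(n : ℤ))

/-- the multiset `D_i(T) = r̄⁺(T^{(i+1)}) ⊎ (- r⁻(T^{(i+1)}))` (paper-indexed `i ≥ 1`) -/
def Dmul (T : SSOT) (i : ℕ) : Multiset ℤ :=
  (upM (posM (T.rows i)) (negM (T.rows (i - 1)))).map (fun n => (n : ℤ)) +
    (negM (T.rows i)).map (fun n => -(n : ℤ))

noncomputable def sortDesc (s : Multiset ℤ) : List ℤ := (s.sort (· ≤ ·)).reverse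

def removeLtInt (q : ℤ) : List ℤ → Option (List ℤ)
  | [] => none
  | p :: t => if p < q then some t else (removeLtInt q t).map (p :: ·)

/-- bracketing between `C` and `D` (both sorted decreasingly): pair `p ∈ C` with `q ∈ D`
whenever `p < q`; returns the unpaired elements of `C` and of `D`, decreasingly. -/
def pairZ (A B : List ℤ) : List ℤ × List ℤ :=
  B.foldl
    (fun st q =>
      match removeLtInt q st.1 with
      | some A' => (A', st.2)
      | none => (st.1, st.2 ++ [q]))
    (A, [])

def posZ (s : Multiset ℤ) : Multiset ℕ := (s.filter (fun z => 0 < z)).map Int.toNat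
def negZ (s : Multiset ℤ) : Multiset ℕ := (s.filter (fun z => z < 0)).map (fun z => (-z).toNat)

/-- row sequence of a strip with positive part `rp` and negative part `rm` -/
noncomputable def rowsFrom (rp rm : Multiset ℕ) : List ℤ :=
  ((rp.sort (· ≤ ·)).reverse).map (fun n => (n : ℤ)) ++
    (rm.sort (· ≤ ·)).map (fun n => -(n : ℤ))

/-- rebuild strips `i-1` and `i` (0-indexed) of `T` from new multisets `C`, `D` by
inverting the `↑`-operations -/
noncomputable def rebuild (T : SSOT) (i : ℕ) (C D : Multiset ℤ) : SSOT :=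
  let rows1 := rowsFrom (posZ C) (downM (negZ C) (posZ D))
  let rows2 := rowsFrom (downM (posZ D) (negZ C)) (negZ D)
  ⟨fun j => if j = i then outsideOf (T.ins (i - 1)) rows1 else T.ins j,
   fun j => if j = i - 1 then rows1 else if j = i then rows2 else T.rows j⟩

/-- raw local operator `ẽ_i` (paper-indexed `i ≥ 1`): after bracketing, move the largest
unpaired element of `D_i(T)` into `C_i(T)` -/
noncomputable def eLoc (i : ℕ) (T : SSOT) : Option SSOT :=
  match (pairZ (sortDesc (Cmul T i)) (sortDesc (Dmul T i))).2.head? with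
  | none => none
  | some b => some (rebuild T i (b ::ₘ Cmul T i) ((Dmul T i).erase b))

/-- raw local operator `f̃_i` (paper-indexed `i ≥ 1`): after bracketing, move the smallest
unpaired element of `C_i(T)` into `D_i(T)` -/
noncomputable def fLoc (i : ℕ) (T : SSOT) : Option SSOT :=
  match (pairZ (sortDesc (Cmul T i)) (sortDesc (Dmul T i))).1.getLast? with
  | none => none
  | some a => some (rebuild T i ((Cmul T i).erase a) (a ::ₘ Dmul T i))

/-- raw local operator `ẽ_0`: delete one addition and one removal of a box in row 1
from `T^{(1)}` -/
noncomputable def e0Loc (T : SSOT) : Option SSOT :=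
  if (1 : ℤ) ∈ T.rows 0 ∧ (-1 : ℤ) ∈ T.rows 0 then
    some ⟨T.ins, fun j => if j = 0 then ((T.rows 0).erase 1).erase (-1) else T.rows j⟩
  else none

/-- raw local operator `f̃_0`: append one addition and one removal of a box in row 1
to `T^{(1)}` -/
def f0Loc (T : SSOT) : Option SSOT :=
  some ⟨T.ins, fun j =>
    if j = 0 then
      ((T.rows 0).filter fun z => decide (0 < z)) ++
        (1 :: (-1) :: ((T.rows 0).filter fun z => decide (z < 0)))
    else T.rows j⟩

/-- the local operator `ẽ_i` relative to an ambient set: the result is `0` if it is not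
in the ambient set -/
noncomputable def eStepA (amb : SSOT → Prop) (i : ℕ) (T : SSOT) : Option SSOT :=
  match (if i = 0 then e0Loc T else eLoc i T) with
  | none => none
  | some T' => if amb T' then some T' else none

noncomputable def fStepA (amb : SSOT → Prop) (i : ℕ) (T : SSOT) : Option SSOT :=
  match (if i = 0 then f0Loc T else fLoc i T) with
  | none => none
  | some T' => if amb T' then some T' else none

noncomputable def ePowA (amb : SSOT → Prop) (i : ℕ) : ℕ → SSOT → Option SSOT
  | 0, T => some T
  | k + 1, T => (eStepA amb i T).bind (ePowA amb i k)

noncomputable def fPowA (amb : SSOT → Prop) (i : ℕ) : ℕ → SSOT → Option SSOT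
  | 0, T => some T
  | k + 1, T => (fStepA amb i T).bind (fPowA amb i k)

/-- `ε_i(T) = max {k : ẽ_i^k(T) ≠ 0}` -/
noncomputable def epsA (amb : SSOT → Prop) (i : ℕ) (T : SSOT) : ℕ :=
  sSup {k | (ePowA amb i k T).isSome}

/-- `φ_i(T) = max {k : f̃_i^k(T) ≠ 0}` -/
noncomputable def phiA (amb : SSOT → Prop) (i : ℕ) (T : SSOT) : ℕ :=
  sSup {k | (fPowA amb i k T).isSome}

end KingSSOT

lemma Finset.lt_card_filter_range_iff {P : ℕ → Prop} [DecidablePred P] {n r : ℕ}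
    (hP : ∀ a b, a ≤ b → b < n → P b → P a) (hr : r < n) :
    r < ((Finset.range n).filter P).card ↔ P r := by
  constructor
  · intro h
    by_contra hr'
    have hsub : (Finset.range n).filter P ⊆ Finset.range r := by
      intro a ha
      simp only [Finset.mem_filter, Finset.mem_range] at ha ⊢
      by_contra hra
      exact hr' (hP r a (not_lt.mp hra) ha.1 ha.2)
    have := Finset.card_le_card hsub
    rw [Finset.card_range] at this
    omega
  · intro h
    have hsub : Finset.range (r + 1) ⊆ (Finset.range n).filter P := by
      intro a ha
      simp only [Finset.mem_filter, Finset.mem_range] at ha ⊢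
      exact ⟨by omega, hP a r (by omega) hr h⟩
    have := Finset.card_le_card hsub
    rw [Finset.card_range] at this
    omega

lemma Finset.card_filter_range_of_iff {P : ℕ → Prop} [DecidablePred P] {n k : ℕ}
    (hP : ∀ r, r < n → (P r ↔ r < k)) (hk : k ≤ n) :
    ((Finset.range n).filter P).card = k := by
  rw [← Finset.card_range k]
  congr 1
  ext r
  simp only [Finset.mem_filter, Finset.mem_range]
  constructor
  · rintro ⟨hr, h⟩; exact (hP r hr).1 h
  · intro h; exact ⟨by omega, (hP r (by omega)).2 h⟩

lemma List.eq_filter_pos_append_filter_neg {l : List ℤ} (hsort : l.Pairwise (· ≥ ·))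
    (h0 : ∀ z ∈ l, z ≠ 0) :
    l = l.filter (fun z => decide (0 < z)) ++ l.filter (fun z => decide (z < 0)) := by
  induction l with
  | nil => rfl
  | cons a t ih =>
    obtain ⟨hat, hsort⟩ := List.pairwise_cons.mp hsort
    have ht := ih hsort fun z hz => h0 z (List.mem_cons_of_mem _ hz)
    rcases lt_or_gt_of_ne (h0 a List.mem_cons_self) with ha | ha
    · have hneg : ∀ z ∈ t, z < 0 := fun z hz => lt_of_le_of_lt (hat z hz) ha
      rw [List.filter_cons_of_neg (by simp; omega), List.filter_cons_of_pos (by simpa using ha),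
        List.filter_eq_nil_iff.mpr (fun z hz => by simp; have := hneg z hz; omega),
        List.filter_eq_self.mpr (fun z hz => by simpa using hneg z hz), List.nil_append]
    · rw [List.filter_cons_of_pos (by simpa using ha), List.filter_cons_of_neg (by simp; omega),
        List.cons_append, ← ht]

namespace KingSSOT

namespace IsPartition

variable {p q : ℕ → ℕ}

lemma antitone (hp : IsPartition p) : Antitone p := antitone_nat_of_succ_le hp.1

lemma eventually_zero (hp : IsPartition p) : ∃ N, ∀ r, N ≤ r → p r = 0 := by
  obtain ⟨N, hN⟩ := hp.2
  exact ⟨N, fun r hr => Nat.le_zero.mp (hN ▸ hp.antitone hr)⟩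

lemma colLen_le_iff (hp : IsPartition p) {j : ℕ} (hj : 1 ≤ j) (r : ℕ) :
    colLen p j ≤ r ↔ p r < j := by
  refine ⟨fun h => ?_, fun h => Nat.sInf_le h⟩
  obtain ⟨N, hN⟩ := hp.eventually_zero
  have hne : {r | p r < j}.Nonempty := ⟨N, show p N < j by rw [hN N le_rfl]; omega⟩
  exact lt_of_le_of_lt (hp.antitone h) (Nat.sInf_mem hne)

lemma lt_colLen_iff (hp : IsPartition p) {j : ℕ} (hj : 1 ≤ j) (r : ℕ) :
    r < colLen p j ↔ j ≤ p r := by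
  rw [← not_le, hp.colLen_le_iff hj]; omega

lemma colLen_antitone (hp : IsPartition p) {j j' : ℕ} (hj : 1 ≤ j) (h : j ≤ j') :
    colLen p j' ≤ colLen p j := by
  rw [hp.colLen_le_iff (hj.trans h)]
  have := (hp.colLen_le_iff hj (colLen p j)).mp le_rfl
  omega

lemma colLen_mono (hp : IsPartition p) (hq : IsPartition q) (hle : ∀ r, p r ≤ q r) {j : ℕ}
    (hj : 1 ≤ j) : colLen p j ≤ colLen q j := by
  rw [hp.colLen_le_iff hj]
  exact lt_of_le_of_lt (hle _) ((hq.colLen_le_iff hj _).mp le_rfl)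

lemma colLen_le_of_eq_zero (hp : IsPartition p) {j R : ℕ} (hj : 1 ≤ j) (hR : p R = 0) :
    colLen p j ≤ R :=
  (hp.colLen_le_iff hj R).mpr (by omega)

lemma ext_colLen (hp : IsPartition p) (hq : IsPartition q) {g : ℕ} (hpg : p 0 ≤ g)
    (hqg : q 0 ≤ g) (h : ∀ j, 1 ≤ j → j ≤ g → colLen p j = colLen q j) : p = q := by
  funext r
  have key : ∀ j, 1 ≤ j → (j ≤ p r ↔ j ≤ q r) := by
    intro j hj
    by_cases hjg : j ≤ g
    · rw [← hp.lt_colLen_iff hj, ← hq.lt_colLen_iff hj, h j hj hjg]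
    · have := hp.antitone (Nat.zero_le r)
      have := hq.antitone (Nat.zero_le r)
      omega
  have h1 := key (p r); have h2 := key (q r)
  omega

end IsPartition

/-- The partition whose column `j + 1` has length `h j` for `j < g`, provided `h` is weakly
decreasing on `[0, g)`. -/
def colPartition (g : ℕ) (h : ℕ → ℕ) : ℕ → ℕ := fun r =>
  ((Finset.range g).filter fun j => r < h j).card

section colPartition

variable {g : ℕ} {h : ℕ → ℕ}

lemma isPartition_colPartition (g : ℕ) (h : ℕ → ℕ) : IsPartition (colPartition g h) := by
  refine ⟨fun r => Finset.card_le_card fun j hj => ?_, ∑ j ∈ Finset.range g, h j, ?_⟩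
  · simp only [Finset.mem_filter] at hj ⊢
    exact ⟨hj.1, by omega⟩
  · refine Finset.card_eq_zero.mpr (Finset.filter_false_of_mem fun j hj => ?_)
    have := Finset.single_le_sum (fun j _ => Nat.zero_le (h j)) hj
    omega

lemma colPartition_zero_le : colPartition g h 0 ≤ g :=
  (Finset.card_filter_le _ _).trans (Finset.card_range g).le

lemma colPartition_eq_zero {R r : ℕ} (hR : ∀ j < g, h j ≤ R) (hr : R ≤ r) :
    colPartition g h r = 0 := by
  refine Finset.card_eq_zero.mpr (Finset.filter_false_of_mem fun j hj => ?_)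
  have := hR j (Finset.mem_range.mp hj)
  omega

lemma colLen_colPartition (hanti : ∀ a b, a ≤ b → b < g → h b ≤ h a) {j : ℕ}
    (hj : j < g) : colLen (colPartition g h) (j + 1) = h j := by
  refine eq_of_forall_lt_iff fun r => ?_
  rw [(isPartition_colPartition g h).lt_colLen_iff (by omega), Nat.succ_le_iff, colPartition,
    Finset.lt_card_filter_range_iff (fun a b hab hb h => lt_of_lt_of_le h (hanti a b hab hb)) hj]

lemma sum_colPartition {R : ℕ} (hR : ∀ j < g, h j ≤ R) :
    ∑ r ∈ Finset.range R, colPartition g h r = ∑ j ∈ Finset.range g, h j := by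
  simp only [colPartition, Finset.card_filter]
  rw [Finset.sum_comm]
  refine Finset.sum_congr rfl fun j hj => ?_
  rw [← Finset.card_filter]
  exact Finset.card_filter_range_of_iff (fun r _ => Iff.rfl) (hR j (Finset.mem_range.mp hj))

end colPartition

def IsHorizontalStrip (lam sig : ℕ → ℕ) : Prop :=
  (∀ r, lam r ≤ sig r) ∧ ∀ r, sig (r + 1) ≤ lam r

namespace IsHorizontalStrip

variable {lam sig : ℕ → ℕ}

lemma colLen_le (hs : IsHorizontalStrip lam sig) (hlam : IsPartition lam)
    (hsig : IsPartition sig) {j : ℕ} (hj : 1 ≤ j) : colLen lam j ≤ colLen sig j :=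
  hlam.colLen_mono hsig hs.1 hj

lemma colLen_le_succ (hs : IsHorizontalStrip lam sig) (hlam : IsPartition lam)
    (hsig : IsPartition sig) {j : ℕ} (hj : 1 ≤ j) : colLen sig j ≤ colLen lam j + 1 := by
  rw [hsig.colLen_le_iff hj]
  exact lt_of_le_of_lt (hs.2 _) ((hlam.colLen_le_iff hj _).mp le_rfl)

end IsHorizontalStrip

lemma isHorizontalStrip_colPartition {g : ℕ} {h h' : ℕ → ℕ} (hle : ∀ j < g, h j ≤ h' j)
    (hle' : ∀ j < g, h' j ≤ h j + 1) :
    IsHorizontalStrip (colPartition g h) (colPartition g h') := by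
  refine ⟨fun r => Finset.card_le_card fun j hj => ?_,
    fun r => Finset.card_le_card fun j hj => ?_⟩
  all_goals
    simp only [Finset.mem_filter, Finset.mem_range] at hj ⊢
    have := hle j hj.1
    have := hle' j hj.1
    exact ⟨hj.1, by omega⟩

lemma applyStep_pos (p : ℕ → ℕ) (i k : ℕ) :
    applyStep p ((i : ℤ) + 1) k = if k = i then p i + 1 else p k := by
  by_cases h : k = i
  · subst h; simp [applyStep]
  · simp only [applyStep, if_neg h]
    rw [if_neg (by omega), if_neg (by omega)]

lemma applyStep_neg (p : ℕ → ℕ) (i k : ℕ) :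
    applyStep p (-((i : ℤ) + 1)) k = if k = i then p i - 1 else p k := by
  by_cases h : k = i
  · subst h; simp only [applyStep, if_true]; rw [if_neg (by omega), if_pos (by omega)]
  · simp only [applyStep, if_neg h]
    rw [if_neg (by omega), if_neg (by omega)]

lemma le_applyStep {z : ℤ} (hz : 0 ≤ z) (p : ℕ → ℕ) (k : ℕ) :
    p k ≤ applyStep p z k := by
  unfold applyStep; split_ifs <;> omega

lemma applyStep_le {z : ℤ} (hz : z ≤ 0) (p : ℕ → ℕ) (k : ℕ) :
    applyStep p z k ≤ p k := by
  unfold applyStep; split_ifs <;> omega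

lemma partsOf_cons (p : ℕ → ℕ) (r : ℤ) (t : List ℤ) :
    partsOf p (r :: t) = p :: partsOf (applyStep p r) t := List.scanl_cons

lemma self_mem_partsOf (p : ℕ → ℕ) (l : List ℤ) : p ∈ partsOf p l := by
  cases l <;> simp [partsOf]

lemma foldl_mem_partsOf (p : ℕ → ℕ) (l : List ℤ) : l.foldl applyStep p ∈ partsOf p l := by
  induction l generalizing p with
  | nil => simp [partsOf]
  | cons r t ih => rw [partsOf_cons]; exact List.mem_cons_of_mem _ (ih _)

lemma le_foldl_of_mem_partsOf {p q : ℕ → ℕ} {l : List ℤ} (hl : ∀ z ∈ l, 0 ≤ z)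
    (hq : q ∈ partsOf p l) (k : ℕ) : q k ≤ l.foldl applyStep p k := by
  induction l generalizing p q with
  | nil => simp_all [partsOf]
  | cons r t ih =>
    rw [partsOf_cons, List.mem_cons] at hq
    have ht : ∀ q' ∈ partsOf (applyStep p r) t, q' k ≤ t.foldl applyStep (applyStep p r) k :=
      fun q' => ih (fun z hz => hl z (List.mem_cons_of_mem _ hz))
    rcases hq with rfl | hq
    · exact (le_applyStep (hl r List.mem_cons_self) q k).trans (ht _ (self_mem_partsOf _ _))
    · exact ht q hq

lemma le_of_mem_partsOf {p q : ℕ → ℕ} {l : List ℤ} (hl : ∀ z ∈ l, z ≤ 0)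
    (hq : q ∈ partsOf p l) (k : ℕ) : q k ≤ p k := by
  induction l generalizing p with
  | nil => simp_all [partsOf]
  | cons r t ih =>
    rw [partsOf_cons, List.mem_cons] at hq
    rcases hq with rfl | hq
    · rfl
    · exact (ih (fun z hz => hl z (List.mem_cons_of_mem _ hz)) hq).trans
        (applyStep_le (hl r List.mem_cons_self) p k)

/-- The last two conditions of `IsOHS`, by recursion on the row sequence. -/
def IsStepChain : (ℕ → ℕ) → List ℤ → Prop
  | _, [] => True
  | p, r :: t => StepOK p r ∧ IsPartition (applyStep p r) ∧ IsStepChain (applyStep p r) t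

lemma isStepChain_iff {p : ℕ → ℕ} {l : List ℤ} (hp : IsPartition p) :
    ((∀ q ∈ partsOf p l, IsPartition q) ∧
      ∀ k, k < l.length → StepOK ((partsOf p l).getD k zeroP) (l.getD k 0)) ↔
      IsStepChain p l := by
  induction l generalizing p with
  | nil => simp [partsOf, IsStepChain, hp]
  | cons r t ih =>
    simp only [partsOf_cons, List.mem_cons, forall_eq_or_imp, List.length_cons, IsStepChain]
    constructor
    · rintro ⟨⟨-, hq⟩, hs⟩
      have hp1 := hq _ (self_mem_partsOf _ _)
      exact ⟨hs 0 (by omega), hp1,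
        (ih hp1).mp ⟨hq, fun k hk => by simpa using hs (k + 1) (by omega)⟩⟩
    · rintro ⟨h0, hp1, hchain⟩
      obtain ⟨hq, hs⟩ := (ih hp1).mpr hchain
      refine ⟨⟨hp, hq⟩, fun k hk => ?_⟩
      cases k with
      | zero => simpa using h0
      | succ k => simpa using hs k (by omega)

lemma isOHS_iff {p : ℕ → ℕ} {l : List ℤ} :
    IsOHS p l ↔ IsPartition p ∧ l.Pairwise (· ≥ ·) ∧ IsStepChain p l := by
  constructor
  · rintro ⟨hp, hl, hparts⟩
    exact ⟨hp, List.isChain_iff_pairwise.mp hl, (isStepChain_iff hp).mp hparts⟩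
  · rintro ⟨hp, hl, h⟩
    exact ⟨hp, List.isChain_iff_pairwise.mpr hl, (isStepChain_iff hp).mpr h⟩

namespace IsStepChain

variable {p : ℕ → ℕ} {l : List ℤ}

lemma append {l' : List ℤ} :
    IsStepChain p (l ++ l') ↔ IsStepChain p l ∧ IsStepChain (l.foldl applyStep p) l' := by
  induction l generalizing p with
  | nil => simp [IsStepChain]
  | cons r t ih => simp only [List.cons_append, IsStepChain, List.foldl_cons, ih, and_assoc]

lemma isPartition_foldl (hp : IsPartition p) (h : IsStepChain p l) :
    IsPartition (l.foldl applyStep p) := by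
  induction l generalizing p with
  | nil => exact hp
  | cons r t ih => exact ih h.2.1 h.2.2

lemma ne_zero (h : IsStepChain p l) : ∀ z ∈ l, z ≠ 0 := by
  induction l generalizing p with
  | nil => simp
  | cons r t ih =>
    rintro z (_ | ⟨_, hz⟩)
    · rcases h.1 with ⟨i, hi, -⟩ | ⟨i, hi, -⟩ <;> omega
    · exact ih h.2.2 z hz

end IsStepChain

lemma StepOK.reverse {p : ℕ → ℕ} {r : ℤ} (h : StepOK p r) :
    applyStep (applyStep p r) (-r) = p ∧ StepOK (applyStep p r) (-r) := by
  rcases h with ⟨i, rfl, hadd⟩ | ⟨i, rfl, hadd⟩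
  · have hback : applyStep (applyStep p ((i : ℤ) + 1)) (-((i : ℤ) + 1)) = p := by
      funext k
      rw [applyStep_neg]
      split_ifs with hk
      · rw [hk, hadd.1]; rfl
      · exact hadd.2 k hk
    exact ⟨hback, Or.inr ⟨i, rfl, by rw [hback]; exact hadd⟩⟩
  · rw [neg_neg]
    have hback : applyStep (applyStep p (-((i : ℤ) + 1))) ((i : ℤ) + 1) = p := by
      funext k
      rw [applyStep_pos]
      split_ifs with hk
      · rw [hk, ← hadd.1]
      · exact (hadd.2 k hk).symm
    exact ⟨hback, Or.inl ⟨i, rfl, by rw [hback]; exact hadd⟩⟩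

lemma IsStepChain.reverse {p : ℕ → ℕ} {l : List ℤ} (hp : IsPartition p)
    (h : IsStepChain p l) :
    IsStepChain (l.foldl applyStep p) (l.reverse.map Neg.neg) ∧
      (l.reverse.map Neg.neg).foldl applyStep (l.foldl applyStep p) = p := by
  induction l generalizing p with
  | nil => exact ⟨trivial, rfl⟩
  | cons r t ih =>
    obtain ⟨hstep, hp1, ht⟩ := h
    obtain ⟨ih1, ih2⟩ := ih hp1 ht
    obtain ⟨hback, hneg⟩ := hstep.reverse
    simp only [List.reverse_cons, List.map_append, List.foldl_cons, List.foldl_append, ih2,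
      List.map_cons, List.map_nil, List.foldl_nil, hback, and_true]
    refine IsStepChain.append.mpr ⟨ih1, ?_⟩
    rw [ih2]
    exact ⟨hneg, by rw [hback]; exact hp, trivial⟩

lemma foldl_applyStep_of_pos {l : List ℤ} (hl : ∀ z ∈ l, 0 < z) (p : ℕ → ℕ) (k : ℕ) :
    l.foldl applyStep p k = p k + l.count ((k : ℤ) + 1) := by
  induction l generalizing p with
  | nil => simp
  | cons r t ih =>
    obtain ⟨i, rfl⟩ : ∃ i : ℕ, r = (i : ℤ) + 1 :=
      ⟨(r - 1).toNat, by have := hl r List.mem_cons_self; omega⟩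
    rw [List.foldl_cons, ih (fun z hz => hl z (List.mem_cons_of_mem _ hz)), applyStep_pos,
      List.count_cons]
    by_cases hk : k = i
    · subst hk; simp; omega
    · rw [if_neg hk]; simp; omega

lemma IsStepChain.isHorizontalStrip_of_pos {p : ℕ → ℕ} {l : List ℤ} (hp : IsPartition p)
    (h : IsStepChain p l) (hl : ∀ z ∈ l, 0 < z) (hsort : l.Pairwise (· ≥ ·)) :
    IsHorizontalStrip p (l.foldl applyStep p) := by
  induction l generalizing p with
  | nil => exact ⟨fun _ => le_rfl, hp.1⟩
  | cons r t ih =>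
    obtain ⟨i, rfl⟩ : ∃ i : ℕ, r = (i : ℤ) + 1 :=
      ⟨(r - 1).toNat, by have := hl r List.mem_cons_self; omega⟩
    obtain ⟨hle, hgap⟩ := ih h.2.1 h.2.2 (fun z hz => hl z (List.mem_cons_of_mem _ hz))
      (List.pairwise_cons.mp hsort).2
    have hp1 := applyStep_pos p i
    rw [List.foldl_cons]
    refine ⟨fun k => (le_applyStep (by omega) p k).trans (hle k), fun k => ?_⟩
    rcases lt_or_ge k i with hki | hik
    · have := hgap k
      rw [hp1, if_neg (by omega)] at this
      exact this
    · -- the rows below row `i` are not touched by `t`, whose entries are at most `i + 1`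
      have hcount : t.count ((k + 1 : ℕ) + 1 : ℤ) = 0 :=
        List.count_eq_zero.mpr fun hmem => by
          have := (List.pairwise_cons.mp hsort).1 _ hmem
          omega
      rw [foldl_applyStep_of_pos (fun z hz => hl z (List.mem_cons_of_mem _ hz)), hcount, hp1,
        if_neg (by omega)]
      exact hp.1 k

lemma starOf_apply (p : ℕ → ℕ) (l : List ℤ) (k : ℕ) :
    starOf p l k = p k + l.count ((k : ℤ) + 1) := by
  rw [starOf, foldl_applyStep_of_pos (fun z hz => by simpa using (List.mem_filter.mp hz).2),
    List.count_filter (by simp)]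

namespace IsOHS

variable {p : ℕ → ℕ} {l : List ℤ}

lemma eq_append (h : IsOHS p l) :
    l = l.filter (fun z => decide (0 < z)) ++ l.filter (fun z => decide (z < 0)) :=
  List.eq_filter_pos_append_filter_neg (isOHS_iff.mp h).2.1 (isOHS_iff.mp h).2.2.ne_zero

lemma isStepChain_append (h : IsOHS p l) :
    IsStepChain p (l.filter fun z => decide (0 < z)) ∧
      IsStepChain (starOf p l) (l.filter fun z => decide (z < 0)) := by
  have hchain := (isOHS_iff.mp h).2.2
  rw [h.eq_append, IsStepChain.append] at hchain
  exact hchain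

lemma foldl_filter_neg (h : IsOHS p l) :
    (l.filter fun z => decide (z < 0)).foldl applyStep (starOf p l) = outsideOf p l := by
  rw [outsideOf, starOf, ← List.foldl_append, ← h.eq_append]

lemma isPartition_starOf (h : IsOHS p l) : IsPartition (starOf p l) :=
  h.isStepChain_append.1.isPartition_foldl h.1

lemma isPartition_outsideOf (h : IsOHS p l) : IsPartition (outsideOf p l) :=
  h.foldl_filter_neg ▸ h.isStepChain_append.2.isPartition_foldl h.isPartition_starOf

lemma isHorizontalStrip_starOf (h : IsOHS p l) : IsHorizontalStrip p (starOf p l) :=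
  h.isStepChain_append.1.isHorizontalStrip_of_pos h.1 (fun z hz => by simpa using
    (List.mem_filter.mp hz).2) ((isOHS_iff.mp h).2.1.filter _)

lemma reverse_filter_neg (h : IsOHS p l) :
    IsStepChain (outsideOf p l) ((l.filter fun z => decide (z < 0)).reverse.map Neg.neg) ∧
      ((l.filter fun z => decide (z < 0)).reverse.map Neg.neg).foldl applyStep
        (outsideOf p l) = starOf p l ∧
      (∀ z ∈ (l.filter fun z => decide (z < 0)).reverse.map Neg.neg, 0 < z) ∧
      ((l.filter fun z => decide (z < 0)).reverse.map Neg.neg).Pairwise (· ≥ ·) := by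
  obtain ⟨h1, h2⟩ := h.isStepChain_append.2.reverse h.isPartition_starOf
  rw [h.foldl_filter_neg] at h1 h2
  refine ⟨h1, h2, fun z hz => ?_, ?_⟩
  · obtain ⟨y, hy, rfl⟩ := List.mem_map.mp hz
    have := (List.mem_filter.mp (List.mem_reverse.mp hy)).2
    simp only [decide_eq_true_eq] at this
    omega
  · rw [List.pairwise_map, List.pairwise_reverse]
    exact ((isOHS_iff.mp h).2.1.filter _).imp fun hab => neg_le_neg hab

lemma isHorizontalStrip_outsideOf (h : IsOHS p l) :
    IsHorizontalStrip (outsideOf p l) (starOf p l) := by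
  obtain ⟨h1, h2, h3, h4⟩ := h.reverse_filter_neg
  exact h2 ▸ h1.isHorizontalStrip_of_pos h.isPartition_outsideOf h3 h4

lemma starOf_apply_eq_outsideOf_add (h : IsOHS p l) (k : ℕ) :
    starOf p l k = outsideOf p l k + l.count (-((k : ℤ) + 1)) := by
  obtain ⟨-, h2, h3, -⟩ := h.reverse_filter_neg
  have hc := List.count_map_of_injective (l.filter fun z => decide (z < 0)).reverse _
    neg_injective (-((k : ℤ) + 1))
  rw [neg_neg] at hc
  rw [← h2, foldl_applyStep_of_pos h3, hc, List.count_reverse,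
    List.count_filter (by simp; omega)]

lemma eq_of_starOf_eq {l' : List ℤ} (h : IsOHS p l) (h' : IsOHS p l')
    (hstar : starOf p l = starOf p l') (hout : outsideOf p l = outsideOf p l') : l = l' := by
  have hcount : ∀ z : ℤ, l.count z = l'.count z := by
    intro z
    rcases lt_trichotomy z 0 with hz | rfl | hz
    · obtain ⟨k, rfl⟩ : ∃ k : ℕ, z = -((k : ℤ) + 1) := ⟨(-z - 1).toNat, by omega⟩
      have e := h.starOf_apply_eq_outsideOf_add k
      rw [hstar, hout, h'.starOf_apply_eq_outsideOf_add k] at e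
      omega
    · rw [List.count_eq_zero.mpr fun hm => (isOHS_iff.mp h).2.2.ne_zero _ hm rfl,
        List.count_eq_zero.mpr fun hm => (isOHS_iff.mp h').2.2.ne_zero _ hm rfl]
    · obtain ⟨k, rfl⟩ : ∃ k : ℕ, z = (k : ℤ) + 1 := ⟨(z - 1).toNat, by omega⟩
      have e := starOf_apply p l k
      rw [hstar, starOf_apply] at e
      omega
  exact (List.perm_iff_count.mpr hcount).eq_of_pairwise
    (fun a b _ _ hab hba => le_antisymm hba hab) (isOHS_iff.mp h).2.1 (isOHS_iff.mp h').2.1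

lemma partsOf_eq_append (h : IsOHS p l) :
    partsOf p l = partsOf p (l.filter fun z => decide (0 < z)) ++
      (partsOf (starOf p l) (l.filter fun z => decide (z < 0))).tail := by
  conv_lhs => rw [h.eq_append]
  exact List.scanl_append

lemma starOf_mem_partsOf (h : IsOHS p l) : starOf p l ∈ partsOf p l :=
  h.partsOf_eq_append ▸ List.mem_append_left _ (foldl_mem_partsOf _ _)

lemma le_starOf_of_mem_partsOf (h : IsOHS p l) {q : ℕ → ℕ} (hq : q ∈ partsOf p l)
    (k : ℕ) : q k ≤ starOf p l k := by
  rw [h.partsOf_eq_append, List.mem_append] at hq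
  rcases hq with hq | hq
  · refine le_foldl_of_mem_partsOf (fun z hz => ?_) hq k
    have := (List.mem_filter.mp hz).2
    simp only [decide_eq_true_eq] at this
    omega
  · refine le_of_mem_partsOf (fun z hz => ?_) (List.mem_of_mem_tail hq) k
    have := (List.mem_filter.mp hz).2
    simp only [decide_eq_true_eq] at this
    omega

end IsOHS

lemma isPartition_applyStep_add {p : ℕ → ℕ} (hp : IsPartition p) {i : ℕ}
    (hi : ∀ j, j + 1 = i → p i < p j) : IsPartition (applyStep p ((i : ℤ) + 1)) := by
  obtain ⟨N, hN⟩ := hp.eventually_zero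
  refine ⟨fun r => ?_, N + i + 1, ?_⟩
  · rw [applyStep_pos, applyStep_pos]
    have := hp.1 r
    by_cases h1 : r + 1 = i
    · subst h1; have := hi r rfl; simp; omega
    · by_cases h2 : r = i
      · subst h2; simp; omega
      · simp [h1, h2, this]
  · rw [applyStep_pos, if_neg (by omega)]
    exact hN _ (by omega)

lemma foldl_replicate_add (p : ℕ → ℕ) (i n : ℕ) :
    (List.replicate n ((i : ℤ) + 1)).foldl applyStep p =
      fun r => if r = i then p i + n else p r := by
  induction n generalizing p with
  | zero => funext r; split_ifs with h <;> simp [h]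
  | succ n ih =>
    rw [List.replicate_succ, List.foldl_cons, ih]
    funext r
    simp only [applyStep_pos]
    split_ifs <;> omega

lemma isStepChain_replicate_add {p : ℕ → ℕ} (hp : IsPartition p) {i n : ℕ}
    (hi : ∀ j, j + 1 = i → p i + n ≤ p j) :
    IsStepChain p (List.replicate n ((i : ℤ) + 1)) := by
  induction n generalizing p with
  | zero => trivial
  | succ n ih =>
    have hadd : AddBox p (applyStep p ((i : ℤ) + 1)) i :=
      ⟨by rw [applyStep_pos, if_pos rfl], fun k hk => by rw [applyStep_pos, if_neg hk]⟩
    have hp1 := isPartition_applyStep_add hp fun j hj => by have := hi j hj; omega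
    refine ⟨Or.inl ⟨i, rfl, hadd⟩, hp1, ih hp1 fun j hj => ?_⟩
    rw [hadd.1, hadd.2 j (by omega)]
    have := hi j hj
    omega

def addRows (lam sig : ℕ → ℕ) : ℕ → List ℤ
  | 0 => []
  | R + 1 => List.replicate (sig R - lam R) ((R : ℤ) + 1) ++ addRows lam sig R

section addRows

variable {lam sig : ℕ → ℕ}

lemma mem_addRows {R : ℕ} {z : ℤ} (hz : z ∈ addRows lam sig R) : 0 < z ∧ z ≤ R := by
  induction R with
  | zero => simp [addRows] at hz
  | succ R ih =>
    rcases List.mem_append.mp hz with hz | hz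
    · rw [List.eq_of_mem_replicate hz]; omega
    · have := ih hz; omega

lemma pairwise_addRows (R : ℕ) : (addRows lam sig R).Pairwise (· ≥ ·) := by
  induction R with
  | zero => exact List.Pairwise.nil
  | succ R ih =>
    refine List.pairwise_append.mpr ⟨List.pairwise_replicate.mpr (Or.inr le_rfl), ih, ?_⟩
    intro a ha b hb
    rw [List.eq_of_mem_replicate ha]
    have := (mem_addRows hb).2
    omega

lemma length_addRows (R : ℕ) :
    (addRows lam sig R).length = ∑ r ∈ Finset.range R, (sig r - lam r) := by
  induction R with
  | zero => rfl
  | succ R ih => rw [addRows, List.length_append, List.length_replicate, ih,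
      Finset.sum_range_succ, add_comm]

lemma addRows_spec (hlam : IsPartition lam) (hsig : IsPartition sig)
    (hs : IsHorizontalStrip lam sig) {R : ℕ} (hR : ∀ r, R ≤ r → lam r = sig r) :
    IsStepChain lam (addRows lam sig R) ∧ (addRows lam sig R).foldl applyStep lam = sig := by
  let fill : ℕ → ℕ → ℕ := fun k r => if k ≤ r then sig r else lam r
  have hfill : ∀ k, IsPartition (fill k) := fun k => by
    obtain ⟨N, hN⟩ := hsig.eventually_zero
    refine ⟨fun r => ?_, N + k, ?_⟩
    · simp only [fill]
      have := hsig.1 r; have := hlam.1 r; have := hs.2 r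
      split_ifs <;> omega
    · simp only [fill, if_pos (show k ≤ N + k by omega)]
      exact hN _ (by omega)
  have key : ∀ k, IsStepChain (fill k) (addRows lam sig k) ∧
      (addRows lam sig k).foldl applyStep (fill k) = sig := by
    intro k
    induction k with
    | zero => exact ⟨trivial, funext fun r => by simp [fill, addRows]⟩
    | succ k ih =>
      have hstep :
          (List.replicate (sig k - lam k) ((k : ℤ) + 1)).foldl applyStep (fill (k + 1)) =
            fill k := by
        rw [foldl_replicate_add]
        funext r
        by_cases hr : r = k
        · subst hr; have := hs.1 r; simp [fill]; omega
        · simp only [fill, if_neg hr]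
          split_ifs <;> omega
      rw [addRows, IsStepChain.append, List.foldl_append, hstep]
      refine ⟨⟨isStepChain_replicate_add (hfill _) fun j hj => ?_, ih.1⟩, ih.2⟩
      simp only [fill]
      have := hs.1 k; have := hs.2 j
      split_ifs <;> subst hj <;> omega
  have hfillR : fill R = lam := funext fun r => by
    simp only [fill]; split_ifs with h
    · exact (hR r h).symm
    · rfl
  exact hfillR ▸ key R

end addRows

def canonRows (lam sig tau : ℕ → ℕ) (R : ℕ) : List ℤ :=
  addRows lam sig R ++ (addRows tau sig R).reverse.map Neg.neg

lemma length_canonRows (lam sig tau : ℕ → ℕ) (R : ℕ) :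
    (canonRows lam sig tau R).length =
      ∑ r ∈ Finset.range R, (sig r - lam r) + ∑ r ∈ Finset.range R, (sig r - tau r) := by
  rw [canonRows, List.length_append, List.length_map, List.length_reverse, length_addRows,
    length_addRows]

lemma isOHS_canonRows {lam sig tau : ℕ → ℕ} {R : ℕ} (hlam : IsPartition lam)
    (hsig : IsPartition sig) (htau : IsPartition tau) (hls : IsHorizontalStrip lam sig)
    (hts : IsHorizontalStrip tau sig) (hlR : ∀ r, R ≤ r → lam r = sig r)
    (htR : ∀ r, R ≤ r → tau r = sig r) :
    IsOHS lam (canonRows lam sig tau R) ∧ starOf lam (canonRows lam sig tau R) = sig ∧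
      outsideOf lam (canonRows lam sig tau R) = tau := by
  obtain ⟨a1, a2⟩ := addRows_spec hlam hsig hls hlR
  obtain ⟨b1, b2⟩ := addRows_spec htau hsig hts htR
  obtain ⟨c1, c2⟩ := b1.reverse htau
  rw [b2] at c1 c2
  have hneg : ∀ z ∈ (addRows tau sig R).reverse.map Neg.neg, z < 0 := fun z hz => by
    obtain ⟨y, hy, rfl⟩ := List.mem_map.mp hz
    have := (mem_addRows (List.mem_reverse.mp hy)).1
    omega
  have hfilter : (canonRows lam sig tau R).filter (fun z => decide (0 < z)) =
      addRows lam sig R := by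
    rw [canonRows, List.filter_append,
      List.filter_eq_self.mpr fun z hz => by simpa using (mem_addRows hz).1,
      List.filter_eq_nil_iff.mpr fun z hz => by simpa using (hneg z hz).le, List.append_nil]
  refine ⟨isOHS_iff.mpr ⟨hlam, ?_, ?_⟩, by rw [starOf, hfilter, a2], ?_⟩
  · refine List.pairwise_append.mpr ⟨pairwise_addRows R, ?_, fun a ha b hb => ?_⟩
    · rw [List.pairwise_map, List.pairwise_reverse]
      exact (pairwise_addRows R).imp fun hab => neg_le_neg hab
    · have := (mem_addRows ha).1
      have := hneg b hb
      omega
  · exact IsStepChain.append.mpr ⟨a1, by rw [a2]; exact c1⟩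
  · rw [outsideOf, canonRows, List.foldl_append, a2, c2]

variable {m g : ℕ} {μ : ℕ → ℕ}

lemma lt_of_lt_apply (hlen : ∀ i, m ≤ i → μ i = 0) {r c : ℕ} (hc : c < μ r) : r < m := by
  by_contra h
  rw [hlen r (not_lt.mp h)] at hc
  omega

namespace King

def numLE (T : King m μ) (v c : ℕ) : ℕ :=
  ((Finset.range m).filter fun r => c < μ r ∧ T.entry r c ≤ v).card

variable (T : King m μ)

lemma entry_lt_entry (hμ : IsPartition μ) {r r' c : ℕ} (h : r < r') (hc : c < μ r') :
    T.entry r c < T.entry r' c := by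
  induction r', h using Nat.le_induction with
  | base => exact T.colsStrict r c hc
  | succ r' _ ih => exact (ih (lt_of_lt_of_le hc (hμ.1 r'))).trans (T.colsStrict r' c hc)

lemma eq_of_entry_eq (hμ : IsPartition μ) {r r' c : ℕ} (hc : c < μ r) (hc' : c < μ r')
    (h : T.entry r c = T.entry r' c) : r = r' := by
  by_contra hne
  rcases lt_or_gt_of_ne hne with hlt | hlt
  · exact (T.entry_lt_entry hμ hlt hc').ne h
  · exact (T.entry_lt_entry hμ hlt hc).ne h.symm

lemma entry_le_iff (hμ : IsPartition μ) (hlen : ∀ i, m ≤ i → μ i = 0) {r c : ℕ}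
    (hc : c < μ r) (v : ℕ) : T.entry r c ≤ v ↔ r < T.numLE v c := by
  rw [numLE, Finset.lt_card_filter_range_iff _ (lt_of_lt_apply hlen hc), and_iff_right hc]
  rintro a b hab - ⟨hb, hbv⟩
  refine ⟨lt_of_lt_of_le hb (hμ.antitone hab), ?_⟩
  rcases hab.lt_or_eq with hab | rfl
  · exact (T.entry_lt_entry hμ hab hb).le.trans hbv
  · exact hbv

lemma numLE_le_half (v c : ℕ) : T.numLE v c ≤ (v + 1) / 2 := by
  refine (Finset.card_le_card fun r hr => ?_).trans (Finset.card_range _).le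
  simp only [Finset.mem_filter, Finset.mem_range] at hr ⊢
  have := T.symplectic r c hr.2.1
  omega

lemma numLE_antitone (v : ℕ) {c c' : ℕ} (h : c ≤ c') : T.numLE v c' ≤ T.numLE v c := by
  refine antitone_nat_of_succ_le (fun d => Finset.card_le_card fun r hr => ?_) h
  simp only [Finset.mem_filter] at hr ⊢
  exact ⟨hr.1, by omega, (T.rowsWeak r d hr.2.1).trans hr.2.2⟩

lemma numLE_succ (hμ : IsPartition μ) (hlen : ∀ i, m ≤ i → μ i = 0) (v c : ℕ) :
    T.numLE (v + 1) c = T.numLE v c + if hasEntry T c (v + 1) then 1 else 0 := by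
  have hsplit : (Finset.range m).filter (fun r => c < μ r ∧ T.entry r c ≤ v + 1) =
      (Finset.range m).filter (fun r => c < μ r ∧ T.entry r c ≤ v) ∪
        (Finset.range m).filter (fun r => c < μ r ∧ T.entry r c = v + 1) := by
    rw [← Finset.filter_or]
    exact Finset.filter_congr fun r _ => by omega
  rw [numLE, numLE, hsplit, Finset.card_union_of_disjoint
    (Finset.disjoint_filter.mpr fun r _ h1 h2 => by omega)]
  congr 1
  split_ifs with hE
  · obtain ⟨r, hr, he⟩ := hE
    refine Finset.card_eq_one.mpr ⟨r, Finset.eq_singleton_iff_unique_mem.mpr ⟨?_, ?_⟩⟩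
    · simp only [Finset.mem_filter, Finset.mem_range]
      exact ⟨lt_of_lt_apply hlen hr, hr, he⟩
    · intro r' hr'
      simp only [Finset.mem_filter] at hr'
      exact T.eq_of_entry_eq hμ hr'.2.1 hr (hr'.2.2.trans he.symm)
  · exact Finset.card_eq_zero.mpr (Finset.filter_false_of_mem fun r _ h => hE ⟨r, h⟩)

lemma numLE_top (hμ : IsPartition μ) (hlen : ∀ i, m ≤ i → μ i = 0) (c : ℕ) :
    T.numLE (2 * m) c = colLen μ (c + 1) :=
  Finset.card_filter_range_of_iff
    (fun r _ => by
      rw [hμ.lt_colLen_iff (by omega), Nat.succ_le_iff]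
      exact ⟨fun h => h.1, fun h => ⟨h, T.upperBound r c h⟩⟩)
    (hμ.colLen_le_of_eq_zero (by omega) (hlen m le_rfl))

lemma ext_of_numLE (hμ : IsPartition μ) (hlen : ∀ i, m ≤ i → μ i = 0)
    (hcol : ∀ i, μ i ≤ g) {T T' : King m μ}
    (h : ∀ v c, v ≤ 2 * m → c < g → T.numLE v c = T'.numLE v c) : T = T' := by
  have hentry : T.entry = T'.entry := by
    funext r c
    by_cases hc : c < μ r
    · have key : ∀ v, v ≤ 2 * m → (T.entry r c ≤ v ↔ T'.entry r c ≤ v) := by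
        intro v hv
        rw [T.entry_le_iff hμ hlen hc, T'.entry_le_iff hμ hlen hc,
          h v c hv (lt_of_lt_of_le hc (hcol r))]
      have h1 := key _ (T.upperBound r c hc)
      have h2 := key _ (T'.upperBound r c hc)
      omega
    · rw [T.zeroOutside r c hc, T'.zeroOutside r c hc]
  cases T; cases T'
  simp_all

/-- Only the first `(v + 1) / 2 = ⌈v/2⌉` rows may hold entries `≤ v`. -/
def coheight (v c : ℕ) : ℕ := (v + 1) / 2 - T.numLE v c

/-- The complement of the subtableau of entries `≤ v` in the `⌈v/2⌉ × g` rectangle, rotated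
by `180°`. -/
def coshape (g v : ℕ) : ℕ → ℕ := colPartition g fun j => T.coheight v (g - 1 - j)

lemma coheight_le_half (v c : ℕ) : T.coheight v c ≤ (v + 1) / 2 := Nat.sub_le _ _

lemma coheight_add_odd (hμ : IsPartition μ) (hlen : ∀ i, m ≤ i → μ i = 0) (i c : ℕ) :
    T.coheight (2 * i + 1) c + (if hasEntry T c (2 * i + 1) then 1 else 0) =
      T.coheight (2 * i) c + 1 := by
  have hs := T.numLE_succ hμ hlen (2 * i) c
  have hb := T.numLE_le_half (2 * i) c
  rw [coheight, coheight]
  split_ifs at hs ⊢ <;> omega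

lemma coheight_add_even (hμ : IsPartition μ) (hlen : ∀ i, m ≤ i → μ i = 0) (i c : ℕ) :
    T.coheight (2 * i + 2) c + (if hasEntry T c (2 * i + 2) then 1 else 0) =
      T.coheight (2 * i + 1) c := by
  have hs := T.numLE_succ hμ hlen (2 * i + 1) c
  have hb := T.numLE_le_half (2 * i + 2) c
  have hb' := T.numLE_le_half (2 * i + 1) c
  simp only [show 2 * i + 1 + 1 = 2 * i + 2 by ring] at hs hb'
  rw [coheight, coheight]
  split_ifs at hs ⊢ <;> omega

lemma colLen_coshape {v j : ℕ} (hj : 1 ≤ j) (hjg : j ≤ g) :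
    colLen (T.coshape g v) j = T.coheight v (g - j) := by
  obtain ⟨j, rfl⟩ : ∃ j', j = j' + 1 := ⟨j - 1, by omega⟩
  rw [coshape, colLen_colPartition (fun a b hab hb => ?_) (by omega)]
  · congr 1; omega
  · have := T.numLE_antitone v (show g - 1 - b ≤ g - 1 - a by omega)
    rw [coheight, coheight]
    omega

lemma isPartition_coshape (g v : ℕ) : IsPartition (T.coshape g v) := isPartition_colPartition _ _

lemma coshape_zero_le (g v : ℕ) : T.coshape g v 0 ≤ g := colPartition_zero_le

lemma coshape_eq_zero {v r : ℕ} (hr : (v + 1) / 2 ≤ r) : T.coshape g v r = 0 :=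
  colPartition_eq_zero (fun _ _ => T.coheight_le_half _ _) hr

lemma coshape_zero (g : ℕ) : T.coshape g 0 = zeroP := funext fun _ => T.coshape_eq_zero (by omega)

lemma isHorizontalStrip_coshape_odd (hμ : IsPartition μ) (hlen : ∀ i, m ≤ i → μ i = 0)
    (i : ℕ) : IsHorizontalStrip (T.coshape g (2 * i)) (T.coshape g (2 * i + 1)) := by
  refine isHorizontalStrip_colPartition (fun j _ => ?_) (fun j _ => ?_) <;>
  · have := T.coheight_add_odd hμ hlen i (g - 1 - j)
    split_ifs at this <;> omega

lemma isHorizontalStrip_coshape_even (hμ : IsPartition μ) (hlen : ∀ i, m ≤ i → μ i = 0)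
    (i : ℕ) : IsHorizontalStrip (T.coshape g (2 * i + 2)) (T.coshape g (2 * i + 1)) := by
  refine isHorizontalStrip_colPartition (fun j _ => ?_) (fun j _ => ?_) <;>
  · have := T.coheight_add_even hμ hlen i (g - 1 - j)
    split_ifs at this <;> omega

lemma sum_coshape {v : ℕ} (hv : (v + 1) / 2 ≤ m) :
    ∑ r ∈ Finset.range m, T.coshape g v r = ∑ c ∈ Finset.range g, T.coheight v c := by
  rw [coshape, sum_colPartition fun _ _ => (T.coheight_le_half _ _).trans hv,
    Finset.sum_range_reflect (T.coheight v)]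

lemma countEntry_eq_card (hμ : IsPartition μ) (hlen : ∀ i, m ≤ i → μ i = 0) (v : ℕ) :
    countEntry m g T v = ((Finset.range g).filter fun c => hasEntry T c v).card := by
  refine Finset.card_bij (fun rc _ => rc.2) (fun rc hrc => ?_) (fun a ha b hb hab => ?_)
    (fun c hc => ?_)
  · simp only [Finset.mem_filter, Finset.mem_product, Finset.mem_range] at hrc ⊢
    exact ⟨hrc.1.2, rc.1, hrc.2⟩
  · simp only [Finset.mem_filter, Finset.mem_product, Finset.mem_range] at ha hb
    have hc : a.2 = b.2 := hab
    rw [← hc] at hb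
    exact Prod.ext (T.eq_of_entry_eq hμ ha.2.1 hb.2.1 (ha.2.2.trans hb.2.2.symm)) hc
  · simp only [Finset.mem_filter, Finset.mem_range] at hc
    obtain ⟨hcg, r, hrc, hre⟩ := hc
    exact ⟨(r, c), by simpa using ⟨⟨lt_of_lt_apply hlen hrc, hcg⟩, hrc, hre⟩, rfl⟩

end King

lemma isPartition_hatP (hμ : IsPartition μ) : IsPartition (hatP m g μ) := by
  refine ⟨fun r => ?_, m, by simp [hatP]⟩
  simp only [hatP]
  split_ifs with h1 h2
  · have := hμ.antitone (show m - 1 - (r + 1) ≤ m - 1 - r by omega); omega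
  · omega
  · exact Nat.zero_le _
  · exact le_rfl

lemma colLen_hatP (hμ : IsPartition μ) (hlen : ∀ i, m ≤ i → μ i = 0)
    (hcol : ∀ i, μ i ≤ g) {j : ℕ} (hj : 1 ≤ j) (hjg : j ≤ g) :
    colLen (hatP m g μ) j = m - colLen μ (g - j + 1) := by
  have hA : colLen μ (g - j + 1) ≤ m := hμ.colLen_le_of_eq_zero (by omega) (hlen m le_rfl)
  refine eq_of_forall_lt_iff fun r => ?_
  rw [(isPartition_hatP hμ).lt_colLen_iff hj]
  simp only [hatP]
  split_ifs with hrm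
  · have := hcol (m - 1 - r)
    have := hμ.colLen_le_iff (show 1 ≤ g - j + 1 by omega) (m - 1 - r)
    omega
  · omega

lemma King.coshape_top (T : King m μ) (hμ : IsPartition μ) (hlen : ∀ i, m ≤ i → μ i = 0)
    (hcol : ∀ i, μ i ≤ g) : T.coshape g (2 * m) = hatP m g μ := by
  refine (T.isPartition_coshape g _).ext_colLen (isPartition_hatP hμ)
    (T.coshape_zero_le g _) ?_ fun j hj hjg => ?_
  · simp only [hatP]; split_ifs <;> omega
  · rw [T.colLen_coshape hj hjg, colLen_hatP hμ hlen hcol hj hjg, King.coheight,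
      T.numLE_top hμ hlen]
    congr 2
    omega

/-- `κ v c` behaves like the number of entries `≤ v` in column `c < g` of a King tableau of
shape `μ` with entries at most `2m`. -/
structure IsKingCount (m g : ℕ) (μ : ℕ → ℕ) (κ : ℕ → ℕ → ℕ) : Prop where
  mono : ∀ c < g, Monotone fun v => κ v c
  succ_le : ∀ v, ∀ c < g, κ (v + 1) c ≤ κ v c + 1
  le_half : ∀ v c, κ v c ≤ (v + 1) / 2
  antitone : ∀ v c c', c ≤ c' → c' < g → κ v c' ≤ κ v c
  top : ∀ c < g, κ (2 * m) c = colLen μ (c + 1)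

/-- The entry in row `r` of column `c` is the least `v` with `r < κ v c`. -/
def entryOfCount (m : ℕ) (μ : ℕ → ℕ) (κ : ℕ → ℕ → ℕ) (r c : ℕ) : ℕ :=
  if c < μ r then ((Finset.range (2 * m)).filter fun v => κ v c ≤ r).card else 0

section entryOfCount

variable {κ : ℕ → ℕ → ℕ} (hμ : IsPartition μ) (hcol : ∀ i, μ i ≤ g)
  (hκ : IsKingCount m g μ κ)
include hμ hcol hκ

lemma entryOfCount_le_iff {r c : ℕ} (hc : c < μ r) (v : ℕ) :
    entryOfCount m μ κ r c ≤ v ↔ r < κ v c := by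
  have hcg : c < g := lt_of_lt_of_le hc (hcol r)
  have htop : r < κ (2 * m) c := by
    rw [hκ.top c hcg, hμ.lt_colLen_iff (by omega)]; exact hc
  rw [entryOfCount, if_pos hc]
  by_cases hv : v < 2 * m
  · rw [← not_lt, Finset.lt_card_filter_range_iff
      (fun a b hab _ hb => (hκ.mono c hcg hab).trans hb) hv]
    exact not_le
  · exact ⟨fun _ => lt_of_lt_of_le htop (hκ.mono c hcg (by omega)),
      fun _ => ((Finset.card_filter_le _ _).trans (Finset.card_range _).le).trans (by omega)⟩

def King.ofCount : King m μ where
  entry := entryOfCount m μ κ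
  rowsWeak r c h := by
    rw [entryOfCount_le_iff hμ hcol hκ (by omega)]
    have hc : c + 1 < g := lt_of_lt_of_le h (hcol r)
    exact lt_of_lt_of_le ((entryOfCount_le_iff hμ hcol hκ h _).mp le_rfl)
      (hκ.antitone _ c (c + 1) (by omega) hc)
  colsStrict r c h := by
    set v := entryOfCount m μ κ (r + 1) c
    have hv : r + 1 < κ v c := (entryOfCount_le_iff hμ hcol hκ h _).mp le_rfl
    have hcg : c < g := lt_of_lt_of_le h (hcol (r + 1))
    have hv0 : v ≠ 0 := fun h0 => by have := hκ.le_half v c; rw [h0] at this hv; omega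
    have := hκ.succ_le (v - 1) c hcg
    rw [Nat.sub_add_cancel (Nat.one_le_iff_ne_zero.mpr hv0)] at this
    have := (entryOfCount_le_iff hμ hcol hκ (lt_of_lt_of_le h (hμ.1 r)) (v - 1)).mpr (by omega)
    omega
  symplectic r c h := by
    by_contra hlt
    have := (entryOfCount_le_iff hμ hcol hκ h (2 * r)).mp (by omega)
    have := hκ.le_half (2 * r) c
    omega
  upperBound r c h := by
    rw [entryOfCount_le_iff hμ hcol hκ h, hκ.top c (lt_of_lt_of_le h (hcol r)),
      hμ.lt_colLen_iff (by omega)]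
    exact h
  zeroOutside r c h := if_neg h

lemma King.numLE_ofCount (hlen : ∀ i, m ≤ i → μ i = 0) {v c : ℕ} (hv : v ≤ 2 * m)
    (hc : c < g) : (King.ofCount hμ hcol hκ).numLE v c = κ v c := by
  have hle : κ v c ≤ colLen μ (c + 1) := hκ.top c hc ▸ hκ.mono c hc hv
  refine Finset.card_filter_range_of_iff (fun r _ => ⟨fun h => ?_, fun h => ?_⟩)
    (hle.trans (hμ.colLen_le_of_eq_zero (by omega) (hlen m le_rfl)))
  · exact (entryOfCount_le_iff hμ hcol hκ h.1 v).mp h.2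
  · have hrc : c + 1 ≤ μ r :=
      (hμ.lt_colLen_iff (by omega) r).mp (show r < colLen μ (c + 1) by omega)
    exact ⟨hrc, (entryOfCount_le_iff hμ hcol hκ hrc v).mpr h⟩

end entryOfCount

/-- The partitions `S.ins 0 ⊆ S_*^{(1)} ⊇ S.ins 1 ⊆ S_*^{(2)} ⊇ ⋯`. -/
def shapeSeq (S : SSOT) (v : ℕ) : ℕ → ℕ :=
  if v % 2 = 0 then S.ins (v / 2) else starOf (S.ins (v / 2)) (S.rows (v / 2))

lemma shapeSeq_two_mul (S : SSOT) (i : ℕ) : shapeSeq S (2 * i) = S.ins i := by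
  simp [shapeSeq]

lemma shapeSeq_two_mul_add_one (S : SSOT) (i : ℕ) :
    shapeSeq S (2 * i + 1) = starOf (S.ins i) (S.rows i) := by
  simp [shapeSeq, Nat.add_mod, Nat.add_div]

namespace IsSSOT

variable {S : SSOT} (hS : IsSSOT S)
include hS

lemma isHorizontalStrip_odd (i : ℕ) :
    IsHorizontalStrip (shapeSeq S (2 * i)) (shapeSeq S (2 * i + 1)) := by
  rw [shapeSeq_two_mul, shapeSeq_two_mul_add_one]
  exact (hS.1 i).isHorizontalStrip_starOf

lemma isHorizontalStrip_even (i : ℕ) :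
    IsHorizontalStrip (shapeSeq S (2 * i + 2)) (shapeSeq S (2 * i + 1)) := by
  rw [show 2 * i + 2 = 2 * (i + 1) by ring, shapeSeq_two_mul, shapeSeq_two_mul_add_one,
    hS.2.1 i]
  exact (hS.1 i).isHorizontalStrip_outsideOf

lemma isPartition_shapeSeq (v : ℕ) : IsPartition (shapeSeq S v) := by
  obtain ⟨i, rfl | rfl⟩ := Nat.even_or_odd' v
  · rw [shapeSeq_two_mul]; exact (hS.1 i).1
  · rw [shapeSeq_two_mul_add_one]; exact (hS.1 i).isPartition_starOf

lemma colLen_shapeSeq_le (h0 : S.ins 0 = zeroP) {j : ℕ} (hj : 1 ≤ j) (v : ℕ) :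
    colLen (shapeSeq S v) j ≤ (v + 1) / 2 := by
  have hstep : ∀ i, colLen (shapeSeq S (2 * i)) j ≤ i →
      colLen (shapeSeq S (2 * i + 1)) j ≤ i + 1 ∧ colLen (shapeSeq S (2 * i + 2)) j ≤ i + 1 :=
    fun i hi => by
      have := (hS.isHorizontalStrip_odd i).colLen_le_succ (hS.isPartition_shapeSeq _)
        (hS.isPartition_shapeSeq _) hj
      have := (hS.isHorizontalStrip_even i).colLen_le (hS.isPartition_shapeSeq _)
        (hS.isPartition_shapeSeq _) hj
      omega
  have heven : ∀ i, colLen (shapeSeq S (2 * i)) j ≤ i := fun i => by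
    induction i with
    | zero =>
      rw [shapeSeq_two_mul, h0]
      exact (isPartition_colPartition 0 0).colLen_le_of_eq_zero hj rfl
    | succ i ih => exact (hstep i ih).2
  obtain ⟨i, rfl | rfl⟩ := Nat.even_or_odd' v
  · exact (heven i).trans (by omega)
  · exact (hstep i (heven i)).1.trans (by omega)

lemma shapeSeq_zero_le (hc : cBound g S) (v : ℕ) : shapeSeq S v 0 ≤ g := by
  obtain ⟨i, rfl | rfl⟩ := Nat.even_or_odd' v
  · rw [shapeSeq_two_mul]; exact hc i _ (self_mem_partsOf _ _)
  · rw [shapeSeq_two_mul_add_one]; exact hc i _ (hS.1 i).starOf_mem_partsOf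

lemma ins_eq_of_le (hr : ∀ i, m ≤ i → S.rows i = []) {i : ℕ} (hi : m ≤ i) :
    S.ins i = S.ins m := by
  induction i, hi using Nat.le_induction with
  | base => rfl
  | succ i hi ih => rw [hS.2.1 i, hr i hi, ← ih]; rfl

end IsSSOT

lemma eq_of_shapeSeq_eq {S S' : SSOT} (hS : IsSSOT S) (hS' : IsSSOT S')
    (hr : ∀ i, m ≤ i → S.rows i = []) (hr' : ∀ i, m ≤ i → S'.rows i = [])
    (h : ∀ v, v ≤ 2 * m → shapeSeq S v = shapeSeq S' v) : S = S' := by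
  have hins : ∀ i, S.ins i = S'.ins i := fun i => by
    rcases le_or_gt i m with hi | hi
    · simpa only [shapeSeq_two_mul] using h (2 * i) (by omega)
    · rw [hS.ins_eq_of_le hr hi.le, hS'.ins_eq_of_le hr' hi.le]
      simpa only [shapeSeq_two_mul] using h (2 * m) le_rfl
  have hrows : ∀ i, S.rows i = S'.rows i := fun i => by
    rcases lt_or_ge i m with hi | hi
    · refine (hS.1 i).eq_of_starOf_eq (hins i ▸ hS'.1 i) ?_ ?_
      · simpa only [shapeSeq_two_mul_add_one, hins i] using h (2 * i + 1) (by omega)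
      · rw [← hS.2.1, hins i, ← hS'.2.1, hins]
    · rw [hr i hi, hr' i hi]
  cases S; cases S'
  simp only [SSOT.mk.injEq]
  exact ⟨funext hins, funext hrows⟩

section psiRel

variable (hμ : IsPartition μ) (hlen : ∀ i, m ≤ i → μ i = 0) (T : King m μ) {S : SSOT}
  (hS : IsSSOT S)
include hμ hlen hS

lemma shapes_of_psiRel_strip (hrel : PsiRel m g T S) {i : ℕ} (hi : i < m)
    (hins : S.ins i = T.coshape g (2 * i)) :
    starOf (S.ins i) (S.rows i) = T.coshape g (2 * i + 1) ∧
      outsideOf (S.ins i) (S.rows i) = T.coshape g (2 * i + 2) := by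
  obtain ⟨hstar0, hcols⟩ := hrel i hi
  have hσ := (hS.1 i).isPartition_starOf
  have hτ := (hS.1 i).isPartition_outsideOf
  have hstar : starOf (S.ins i) (S.rows i) = T.coshape g (2 * i + 1) := by
    refine hσ.ext_colLen (T.isPartition_coshape g _) hstar0 (T.coshape_zero_le g _)
      fun j hj hjg => ?_
    have h1 := (hS.1 i).isHorizontalStrip_starOf.colLen_le (hS.1 i).1 hσ hj
    have h2 := (hS.1 i).isHorizontalStrip_starOf.colLen_le_succ (hS.1 i).1 hσ hj
    have hiff := (hcols j hj hjg).1
    have hodd := T.coheight_add_odd hμ hlen i (g - j)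
    rw [show colLen (S.ins i) j = T.coheight (2 * i) (g - j) by
      rw [hins, T.colLen_coshape hj hjg]] at h1 h2 hiff
    rw [T.colLen_coshape hj hjg]
    by_cases hE : hasEntry T (g - j) (2 * i + 1) <;> simp only [hE, iff_true, iff_false,
      if_true, if_false] at hiff hodd <;> omega
  refine ⟨hstar, hτ.ext_colLen (T.isPartition_coshape g _)
    (((hS.1 i).isHorizontalStrip_outsideOf.1 0).trans hstar0) (T.coshape_zero_le g _)
    fun j hj hjg => ?_⟩
  have h1 := (hS.1 i).isHorizontalStrip_outsideOf.colLen_le hτ hσ hj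
  have h2 := (hS.1 i).isHorizontalStrip_outsideOf.colLen_le_succ hτ hσ hj
  have hiff := (hcols j hj hjg).2
  have heven := T.coheight_add_even hμ hlen i (g - j)
  rw [show colLen (starOf (S.ins i) (S.rows i)) j = T.coheight (2 * i + 1) (g - j) by
    rw [hstar, T.colLen_coshape hj hjg]] at h1 h2 hiff
  rw [T.colLen_coshape hj hjg]
  by_cases hE : hasEntry T (g - j) (2 * i + 2) <;> simp only [hE, iff_true, iff_false,
    if_true, if_false] at hiff heven <;> omega

lemma psiRel_iff (h0 : S.ins 0 = zeroP) :
    PsiRel m g T S ↔ ∀ v, v ≤ 2 * m → shapeSeq S v = T.coshape g v := by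
  constructor
  · intro hrel
    have hins : ∀ i, i ≤ m → S.ins i = T.coshape g (2 * i) := by
      intro i
      induction i with
      | zero => exact fun _ => h0.trans (T.coshape_zero g).symm
      | succ i ih =>
        intro hi
        exact (hS.2.1 i).trans
          (shapes_of_psiRel_strip hμ hlen T hS hrel (by omega) (ih (by omega))).2
    intro v hv
    obtain ⟨i, rfl | rfl⟩ := Nat.even_or_odd' v
    · rw [shapeSeq_two_mul, hins i (by omega)]
    · rw [shapeSeq_two_mul_add_one]
      exact (shapes_of_psiRel_strip hμ hlen T hS hrel (by omega) (hins i (by omega))).1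
  · intro h i hi
    have hstar := h (2 * i + 1) (by omega)
    have hout := h (2 * (i + 1)) (by omega)
    rw [shapeSeq_two_mul_add_one] at hstar
    rw [shapeSeq_two_mul, hS.2.1 i] at hout
    rw [hstar, hout, ← shapeSeq_two_mul, h (2 * i) (by omega)]
    refine ⟨T.coshape_zero_le g _, fun j hj hjg => ?_⟩
    have hodd := T.coheight_add_odd hμ hlen i (g - j)
    have heven := T.coheight_add_even hμ hlen i (g - j)
    simp only [T.colLen_coshape hj hjg, show 2 * (i + 1) = 2 * i + 2 by ring]
    constructor
    · by_cases hE : hasEntry T (g - j) (2 * i + 1) <;> simp only [hE, iff_true, iff_false,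
        if_true, if_false] at hodd ⊢ <;> omega
    · by_cases hE : hasEntry T (g - j) (2 * i + 2) <;> simp only [hE, iff_true, iff_false,
        if_true, if_false] at heven ⊢ <;> omega

end psiRel

namespace King

/-- `Ψ_{m,g}(T)`. -/
def toSSOT (T : King m μ) (g : ℕ) : SSOT where
  ins i := T.coshape g (2 * min i m)
  rows i := if i < m then
      canonRows (T.coshape g (2 * i)) (T.coshape g (2 * i + 1)) (T.coshape g (2 * i + 2)) m
    else []

variable (T : King m μ) (hμ : IsPartition μ) (hlen : ∀ i, m ≤ i → μ i = 0)

lemma toSSOT_ins_of_le {i : ℕ} (hi : i ≤ m) : (T.toSSOT g).ins i = T.coshape g (2 * i) := by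
  simp only [toSSOT, Nat.min_eq_left hi]

lemma toSSOT_ins_of_ge {i : ℕ} (hi : m ≤ i) : (T.toSSOT g).ins i = T.coshape g (2 * m) := by
  simp only [toSSOT, Nat.min_eq_right hi]

lemma toSSOT_rows_of_lt {i : ℕ} (hi : i < m) : (T.toSSOT g).rows i =
    canonRows (T.coshape g (2 * i)) (T.coshape g (2 * i + 1)) (T.coshape g (2 * i + 2)) m :=
  if_pos hi

lemma toSSOT_rows_of_ge {i : ℕ} (hi : m ≤ i) : (T.toSSOT g).rows i = [] :=
  if_neg (by omega)

include hμ hlen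

lemma toSSOT_strip {i : ℕ} (hi : i < m) :
    IsOHS (T.coshape g (2 * i)) ((T.toSSOT g).rows i) ∧
      starOf (T.coshape g (2 * i)) ((T.toSSOT g).rows i) = T.coshape g (2 * i + 1) ∧
      outsideOf (T.coshape g (2 * i)) ((T.toSSOT g).rows i) = T.coshape g (2 * i + 2) := by
  rw [T.toSSOT_rows_of_lt hi]
  refine isOHS_canonRows (T.isPartition_coshape g _) (T.isPartition_coshape g _)
    (T.isPartition_coshape g _) (T.isHorizontalStrip_coshape_odd hμ hlen i)
    (T.isHorizontalStrip_coshape_even hμ hlen i) (fun r hr => ?_) (fun r hr => ?_) <;>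
  rw [T.coshape_eq_zero (by omega), T.coshape_eq_zero (by omega)]

lemma toSSOT_mem (hcol : ∀ i, μ i ≤ g) : SSOTmem g m zeroP (hatP m g μ) (T.toSSOT g) := by
  have hstrip : ∀ i, IsOHS ((T.toSSOT g).ins i) ((T.toSSOT g).rows i) := fun i => by
    rcases lt_or_ge i m with hi | hi
    · rw [T.toSSOT_ins_of_le hi.le]; exact (T.toSSOT_strip hμ hlen hi).1
    · rw [T.toSSOT_rows_of_ge hi]
      exact isOHS_iff.mpr ⟨T.isPartition_coshape g _, List.Pairwise.nil, trivial⟩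
  refine ⟨⟨hstrip, fun i => ?_, m, fun i => T.toSSOT_rows_of_ge⟩, ?_,
    ⟨m, fun i hi => (T.toSSOT_ins_of_ge hi).trans (T.coshape_top hμ hlen hcol)⟩,
    fun i => T.toSSOT_rows_of_ge, fun i q hq => ?_⟩
  · rcases lt_or_ge i m with hi | hi
    · rw [T.toSSOT_ins_of_le hi.le, (T.toSSOT_strip hμ hlen hi).2.2, T.toSSOT_ins_of_le hi]
      rfl
    · rw [T.toSSOT_rows_of_ge hi, T.toSSOT_ins_of_ge hi, T.toSSOT_ins_of_ge (by omega)]; rfl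
  · rw [T.toSSOT_ins_of_le (Nat.zero_le m)]; exact T.coshape_zero g
  · refine ((hstrip i).le_starOf_of_mem_partsOf hq 0).trans ?_
    rcases lt_or_ge i m with hi | hi
    · rw [T.toSSOT_ins_of_le hi.le, (T.toSSOT_strip hμ hlen hi).2.1]
      exact T.coshape_zero_le g _
    · rw [T.toSSOT_rows_of_ge hi]
      exact T.coshape_zero_le g _

lemma shapeSeq_toSSOT {v : ℕ} (hv : v ≤ 2 * m) : shapeSeq (T.toSSOT g) v = T.coshape g v := by
  obtain ⟨i, rfl | rfl⟩ := Nat.even_or_odd' v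
  · rw [shapeSeq_two_mul, T.toSSOT_ins_of_le (by omega)]
  · rw [shapeSeq_two_mul_add_one, T.toSSOT_ins_of_le (by omega),
      (T.toSSOT_strip hμ hlen (by omega)).2.1]

lemma kingWt_eq_cwt_toSSOT {i : ℕ} (hi : i < m) : kingWt m g T i = cwt g (T.toSSOT g) i := by
  have hsum := fun v (hv : (v + 1) / 2 ≤ m) => T.sum_coshape (g := g) hv
  have hodd : ∑ c ∈ Finset.range g, T.coheight (2 * i + 1) c + countEntry m g T (2 * i + 1) =
      ∑ c ∈ Finset.range g, T.coheight (2 * i) c + g := by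
    rw [T.countEntry_eq_card hμ hlen, Finset.card_filter, ← Finset.sum_add_distrib,
      Finset.sum_congr rfl fun c _ => T.coheight_add_odd hμ hlen i c, Finset.sum_add_distrib,
      Finset.sum_const, Finset.card_range, smul_eq_mul, mul_one]
  have heven : ∑ c ∈ Finset.range g, T.coheight (2 * i + 2) c + countEntry m g T (2 * i + 2) =
      ∑ c ∈ Finset.range g, T.coheight (2 * i + 1) c := by
    rw [T.countEntry_eq_card hμ hlen, Finset.card_filter, ← Finset.sum_add_distrib,
      Finset.sum_congr rfl fun c _ => T.coheight_add_even hμ hlen i c]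
  have hlength : ((T.toSSOT g).rows i).length + countEntry m g T (2 * i + 1) =
      g + countEntry m g T (2 * i + 2) := by
    have hd : ∀ {v w : ℕ}, (∀ r, T.coshape g v r ≤ T.coshape g w r) →
        ∑ r ∈ Finset.range m, (T.coshape g w r - T.coshape g v r) +
          ∑ r ∈ Finset.range m, T.coshape g v r = ∑ r ∈ Finset.range m, T.coshape g w r :=
      fun hvw => by
        rw [← Finset.sum_add_distrib]
        exact Finset.sum_congr rfl fun r _ => Nat.sub_add_cancel (hvw r)
    have hd1 := hd (T.isHorizontalStrip_coshape_odd hμ hlen i).1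
    have hd2 := hd (T.isHorizontalStrip_coshape_even hμ hlen i).1
    rw [hsum _ (by omega), hsum _ (by omega)] at hd1 hd2
    rw [T.toSSOT_rows_of_lt hi, length_canonRows]
    omega
  rw [kingWt, cwt]
  omega

end King

lemma eq_toSSOT_of_psiRel (hμ : IsPartition μ) (hlen : ∀ i, m ≤ i → μ i = 0)
    (hcol : ∀ i, μ i ≤ g) (T : King m μ) {S : SSOT} (hS : SSOTmem g m zeroP (hatP m g μ) S)
    (hrel : PsiRel m g T S) : S = T.toSSOT g := by
  have hT := T.toSSOT_mem hμ hlen hcol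
  exact eq_of_shapeSeq_eq hS.1 hT.1 hS.2.2.2.1 hT.2.2.2.1 fun v hv =>
    ((psiRel_iff hμ hlen T hS.1 hS.2.1).mp hrel v hv).trans (T.shapeSeq_toSSOT hμ hlen hv).symm

/-- The number of entries `≤ v` in column `c` of the King tableau whose coshapes are the
shapes of `S`. -/
noncomputable def ssotCount (S : SSOT) (g v c : ℕ) : ℕ :=
  (v + 1) / 2 - colLen (shapeSeq S v) (g - c)

section ssotCount

variable (hμ : IsPartition μ) (hlen : ∀ i, m ≤ i → μ i = 0) (hcol : ∀ i, μ i ≤ g)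
  {S : SSOT} (hS : SSOTmem g m zeroP (hatP m g μ) S)
include hμ hlen hcol hS

lemma isKingCount_ssotCount : IsKingCount m g μ (ssotCount S g) := by
  obtain ⟨hS, h0, hout, hr, -⟩ := hS
  have hcl := fun v c (hc : c < g) => hS.colLen_shapeSeq_le h0 (show 1 ≤ g - c by omega) v
  have hpart := hS.isPartition_shapeSeq
  have hstep : ∀ v, ∀ c < g, ssotCount S g v c ≤ ssotCount S g (v + 1) c ∧
      ssotCount S g (v + 1) c ≤ ssotCount S g v c + 1 := fun v c hc => by
    have hj : 1 ≤ g - c := by omega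
    obtain ⟨i, rfl | rfl⟩ := Nat.even_or_odd' v
    · have := (hS.isHorizontalStrip_odd i).colLen_le (hpart _) (hpart _) hj
      have := (hS.isHorizontalStrip_odd i).colLen_le_succ (hpart _) (hpart _) hj
      have := hcl (2 * i) c hc
      simp only [ssotCount]
      omega
    · have := (hS.isHorizontalStrip_even i).colLen_le (hpart _) (hpart _) hj
      have := (hS.isHorizontalStrip_even i).colLen_le_succ (hpart _) (hpart _) hj
      have := hcl (2 * i + 1) c hc
      simp only [ssotCount, show 2 * i + 1 + 1 = 2 * i + 2 by ring]
      omega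
  have hinsm : S.ins m = hatP m g μ := by
    obtain ⟨N, hN⟩ := hout
    rw [← hS.ins_eq_of_le hr (le_max_left m N), hN _ (le_max_right m N)]
  refine ⟨fun c hc => monotone_nat_of_le_succ fun v => (hstep v c hc).1,
    fun v c hc => (hstep v c hc).2, fun v c => Nat.sub_le _ _, fun v c c' hcc' hc' => ?_,
    fun c hc => ?_⟩
  · have := (hpart v).colLen_antitone (show 1 ≤ g - c' by omega) (show g - c' ≤ g - c by omega)
    simp only [ssotCount]
    omega
  · have := hμ.colLen_le_of_eq_zero (show 1 ≤ c + 1 by omega) (hlen m le_rfl)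
    rw [ssotCount, shapeSeq_two_mul, hinsm, colLen_hatP hμ hlen hcol (by omega) (by omega)]
    rw [show g - (g - c) + 1 = c + 1 by omega]
    omega

lemma coshape_ofCount_ssotCount {v : ℕ} (hv : v ≤ 2 * m) :
    (King.ofCount hμ hcol (isKingCount_ssotCount hμ hlen hcol hS)).coshape g v =
      shapeSeq S v := by
  refine (King.isPartition_coshape _ g v).ext_colLen (hS.1.isPartition_shapeSeq v)
    (King.coshape_zero_le _ g v) (hS.1.shapeSeq_zero_le hS.2.2.2.2 v) fun j hj hjg => ?_
  rw [King.colLen_coshape _ hj hjg, King.coheight, King.numLE_ofCount _ _ _ hlen hv (by omega),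
    ssotCount, show g - (g - j) = j by omega]
  have := hS.1.colLen_shapeSeq_le hS.2.1 hj v
  omega

end ssotCount

lemma King.numLE_eq_of_coshape_eq {T T' : King m μ} {v : ℕ}
    (h : T.coshape g v = T'.coshape g v) {c : ℕ} (hc : c < g) : T.numLE v c = T'.numLE v c := by
  have := congrArg (colLen · (g - c)) h
  simp only [T.colLen_coshape (show 1 ≤ g - c by omega) (Nat.sub_le g c),
    T'.colLen_coshape (show 1 ≤ g - c by omega) (Nat.sub_le g c), King.coheight,
    show g - (g - c) = c by omega] at this
  have := T.numLE_le_half v c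
  have := T'.numLE_le_half v c
  omega

lemma King.eq_of_psiRel (hμ : IsPartition μ) (hlen : ∀ i, m ≤ i → μ i = 0)
    (hcol : ∀ i, μ i ≤ g) {S : SSOT} (hS : IsSSOT S) (h0 : S.ins 0 = zeroP) {T T' : King m μ}
    (h : PsiRel m g T S) (h' : PsiRel m g T' S) : T = T' :=
  King.ext_of_numLE hμ hlen hcol fun v _ hv hc => King.numLE_eq_of_coshape_eq
    (((psiRel_iff hμ hlen T hS h0).mp h v hv).symm.trans
      ((psiRel_iff hμ hlen T' hS h0).mp h' v hv)) hc

theorem king_ssot_bijection_general (m g : ℕ) (μ : ℕ → ℕ)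
    (hpart : IsPartition μ) (hlen : ∀ i, m ≤ i → μ i = 0) (hcol : ∀ i, μ i ≤ g) :
    (∀ T : King m μ, ∃! S : SSOT, SSOTmem g m zeroP (hatP m g μ) S ∧ PsiRel m g T S) ∧
    (∀ S : SSOT, SSOTmem g m zeroP (hatP m g μ) S → ∃! T : King m μ, PsiRel m g T S) ∧
    (∀ (T : King m μ) (S : SSOT), SSOTmem g m zeroP (hatP m g μ) S → PsiRel m g T S →
      ∀ i, i < m → kingWt m g T i = cwt g S i) := by
  refine ⟨fun T => ?_, fun S hS => ?_, fun T S hS hrel i hi => ?_⟩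
  · have hT := T.toSSOT_mem hpart hlen hcol
    exact ⟨T.toSSOT g, ⟨hT, (psiRel_iff hpart hlen T hT.1 hT.2.1).mpr
      fun v hv => T.shapeSeq_toSSOT hpart hlen hv⟩,
      fun S hS => eq_toSSOT_of_psiRel hpart hlen hcol T hS.1 hS.2⟩
  · have hrel := (psiRel_iff hpart hlen _ hS.1 hS.2.1).mpr fun v hv =>
      (coshape_ofCount_ssotCount hpart hlen hcol hS hv).symm
    exact ⟨_, hrel, fun T' hT' => King.eq_of_psiRel hpart hlen hcol hS.1 hS.2.1 hT' hrel⟩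
  · rw [eq_toSSOT_of_psiRel hpart hlen hcol T hS hrel]
    exact T.kingWt_eq_cwt_toSSOT hpart hlen hi

/-- Theorem `main1`: for a partition `μ` with at most `m` parts, each
part at most `g`, the correspondence `Ψ_{m,g}` is a crystal-weight-preserving bijection
from `K(μ,m)` onto `SSOT_g(μ̂,m)`. -/
theorem king_ssot_bijection (m g : ℕ) (hm : 1 ≤ m) (hg : 1 ≤ g) (μ : ℕ → ℕ)
    (hpart : IsPartition μ) (hlen : ∀ i, m ≤ i → μ i = 0) (hcol : ∀ i, μ i ≤ g) :
    (∀ T : King m μ, ∃! S : SSOT, SSOTmem g m zeroP (hatP m g μ) S ∧ PsiRel m g T S) ∧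
    (∀ S : SSOT, SSOTmem g m zeroP (hatP m g μ) S → ∃! T : King m μ, PsiRel m g T S) ∧
    (∀ (T : King m μ) (S : SSOT), SSOTmem g m zeroP (hatP m g μ) S → PsiRel m g T S →
      ∀ i, i < m → kingWt m g T i = cwt g S i) :=
  king_ssot_bijection_general m g μ hpart hlen hcol

end KingSSOT
end

section
/- Let M ∈ M̂_m have total entry sum m' and row sums α = (α_1,…,α_m), and let w ∈ S_{m'} be the standardization of the two-line array w_M: the top row becomes 1,2,…,m' and, for each i, the α_i bottom-row entries equal to i are replaced, from left to right, by the values β_i, β_i−1, …, β_{i−1}+1 in decreasing order, where β_i = α_1+⋯+α_i. Then w is an involution of {1,…,m'} without fixed points, and w(β_{i−1}+1) > w(β_{i−1}+2) > ⋯ > w(β_i) for every i. -/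
open scoped Classical

namespace KingSSOT

/-- `β_i = α_1 + ⋯ + α_i` where `α_k` is the `k`-th row sum of `M` -/
def betaM (M : ℕ → ℕ → ℕ) (m i : ℕ) : ℕ := ∑ k ∈ Finset.Icc 1 i, rowSumM M m k

/-- the standardization of the two-line array `w_M`: the bottom entries equal to `j` are
replaced, from left to right, by `β_j, β_j - 1, …, β_{j-1}+1`. -/
def wstd (M : ℕ → ℕ → ℕ) (m p : ℕ) : ℕ :=
  betaM M m ((twoLine M m).getD (p - 1) (0, 0)).2 + 1 -
    (((twoLine M m).take p).filter
      (fun c => c.2 == ((twoLine M m).getD (p - 1) (0, 0)).2)).length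

/-! In `w_M` the `t`-th copy of the column `(a; b)` sits at position
`β_{a-1} + (M_{a,b+1} + ⋯ + M_{a,m}) + t`, and standardization sends it to
`β_b + 1 - (M_{1,b} + ⋯ + M_{a-1,b}) - t`. Splitting the `b`-th row sum of the symmetric matrix
`M` at column `a` shows that this is the position of the `(M_{ab} + 1 - t)`-th copy of `(b; a)`.
So `w` exchanges the copies of `(a; b)` and `(b; a)` in reverse order, which makes it an
involution; a fixed point would need `a = b` and `2t = M_{aa} + 1`, impossible since `M_{aa}` is
even. Inside the block of top entry `a` the bottom entry weakly decreases and, for equal bottom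
entries, the copy index increases, so the images decrease. -/

theorem _root_.Nat.exists_lt_and_le_succ (f : ℕ → ℕ) {n p : ℕ} (h0 : f 0 < p)
    (hn : p ≤ f n) : ∃ k < n, f k < p ∧ p ≤ f (k + 1) := by
  induction n with
  | zero => omega
  | succ n ih =>
    by_cases hp : p ≤ f n
    · obtain ⟨k, hk, hfk⟩ := ih hp
      exact ⟨k, by omega, hfk⟩
    · exact ⟨n, by omega, by omega, hn⟩

theorem _root_.Finset.sum_Ioc_eq_sum_map_range' {M : Type*} [AddCommMonoid M] (f : ℕ → M)
    (b n : ℕ) :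
    ∑ j ∈ Finset.Ioc b n, f j = ((List.range' b (n - b)).map fun j => f (j + 1)).sum := by
  rw [Nat.Ioc_eq_range']
  change ((List.range' (b + 1) (n - b)).map f).sum = _
  rw [List.range'_succ_left, List.map_map]
  rfl

theorem _root_.List.range_eq_append_singleton_append {k n : ℕ} (h : k < n) :
    List.range n = List.range k ++ [k] ++ List.range' (k + 1) (n - k - 1) := by
  obtain ⟨c, rfl⟩ : ∃ c, n = k + 1 + c := ⟨n - k - 1, by omega⟩
  rw [List.range_add, List.range_succ, List.range'_eq_map_range,
    show k + 1 + c - k - 1 = c by omega]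

open List in
theorem _root_.List.getD_append_replicate {α : Type*} (L₁ L₂ : List α) {x d : α} {n t : ℕ}
    (ht : t < n) : (L₁ ++ replicate n x ++ L₂).getD (L₁.length + t) d = x := by
  rw [append_assoc, getD_append_right _ _ _ _ (by omega), Nat.add_sub_cancel_left,
    getD_append _ _ _ _ (by simpa using ht), getD_eq_getElem?_getD, getElem?_replicate,
    if_pos ht]
  rfl

open List in
theorem _root_.List.countP_take_append_replicate {α : Type*} (p : α → Bool)
    (L₁ L₂ : List α) {x : α} {n t : ℕ} (hx : p x) (ht : t ≤ n) :
    ((L₁ ++ replicate n x ++ L₂).take (L₁.length + t)).countP p = L₁.countP p + t := by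
  rw [append_assoc, take_append, take_of_length_le (by omega), Nat.add_sub_cancel_left,
    take_append_of_le_length (by simpa using ht), take_replicate, countP_append,
    countP_replicate, if_pos hx, min_eq_left ht]

section Standardization

variable (M : ℕ → ℕ → ℕ) (m : ℕ)

def twoLineRow (a : ℕ) : List (ℕ × ℕ) :=
  (List.range m).reverse.flatMap fun j => List.replicate (M a (j + 1)) (a, j + 1)

def rowSumRight (a b : ℕ) : ℕ := ∑ j ∈ Finset.Ioc b m, M a j

def colSumAbove (a b : ℕ) : ℕ := ∑ i ∈ Finset.Ioc 0 (a - 1), M i b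

/-- the (1-indexed) position in `w_M` of the `t`-th copy of the column `(a; b)` -/
def twoLinePos (a b t : ℕ) : ℕ := betaM M m (a - 1) + rowSumRight M m a b + t

theorem twoLine_eq_flatMap_twoLineRow :
    twoLine M m = (List.range m).flatMap fun i => twoLineRow M m (i + 1) := rfl

theorem betaM_zero : betaM M m 0 = 0 := by
  simp [betaM]

theorem betaM_succ (k : ℕ) : betaM M m (k + 1) = betaM M m k + rowSumM M m (k + 1) :=
  Finset.sum_Icc_succ_top (by omega) _

theorem betaM_mono : Monotone (betaM M m) := fun _ _ h =>
  Finset.sum_le_sum_of_subset (Finset.Icc_subset_Icc_right h)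

theorem rowSumM_eq_sum_Ioc (a : ℕ) : rowSumM M m a = ∑ j ∈ Finset.Ioc 0 m, M a j := by
  rw [rowSumM, Finset.range_eq_Ico, Finset.sum_Ico_add' (M a)]
  rfl

theorem rowSumRight_zero (a : ℕ) : rowSumRight M m a 0 = rowSumM M m a :=
  (rowSumM_eq_sum_Ioc M m a).symm

theorem rowSumRight_self (a : ℕ) : rowSumRight M m a m = 0 := by
  simp [rowSumRight]

theorem rowSumRight_pred (a : ℕ) {b : ℕ} (hb : 1 ≤ b) (hbm : b ≤ m) :
    rowSumRight M m a (b - 1) = M a b + rowSumRight M m a b := by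
  obtain ⟨k, rfl⟩ : ∃ k, b = k + 1 := ⟨b - 1, by omega⟩
  rw [rowSumRight, rowSumRight, Nat.add_sub_cancel,
    ← Finset.sum_Ioc_consecutive _ k.le_succ hbm, Nat.Ioc_succ_singleton, Finset.sum_singleton]

theorem rowSumRight_antitone (a : ℕ) : Antitone (rowSumRight M m a) := fun _ _ h =>
  Finset.sum_le_sum_of_subset (Finset.Ioc_subset_Ioc_left h)

theorem betaM_eq_twoLinePos_add_colSumAbove (hsym : ∀ p q, M p q = M q p) {a b : ℕ}
    (ha : 1 ≤ a) (ham : a ≤ m) (hb : 1 ≤ b) :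
    betaM M m b = twoLinePos M m b a (M a b) + colSumAbove M a b := by
  obtain ⟨k, rfl⟩ : ∃ k, b = k + 1 := ⟨b - 1, by omega⟩
  obtain ⟨i, rfl⟩ : ∃ i, a = i + 1 := ⟨a - 1, by omega⟩
  have hrow : rowSumM M m (k + 1) =
      colSumAbove M (i + 1) (k + 1) + M (i + 1) (k + 1) + rowSumRight M m (k + 1) (i + 1) := by
    rw [rowSumM_eq_sum_Ioc, colSumAbove, rowSumRight, Nat.add_sub_cancel,
      ← Finset.sum_Ioc_consecutive _ (Nat.zero_le (i + 1)) ham,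
      ← Finset.sum_Ioc_consecutive _ (Nat.zero_le i) i.le_succ, Nat.Ioc_succ_singleton,
      Finset.sum_singleton, hsym (k + 1) (i + 1)]
    simp only [hsym (k + 1)]
  rw [betaM_succ, hrow, twoLinePos, Nat.add_sub_cancel]
  ring

theorem length_twoLineRow (a : ℕ) : (twoLineRow M m a).length = rowSumM M m a := by
  rw [rowSumM_eq_sum_Ioc, Finset.sum_Ioc_eq_sum_map_range', twoLineRow, List.length_flatMap,
    List.map_reverse, List.sum_reverse, List.range_eq_range']
  simp

theorem twoLineRow_eq_append_replicate (a : ℕ) {b : ℕ} (hb : 1 ≤ b) (hbm : b ≤ m) :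
    ∃ L₁ L₂, twoLineRow M m a = L₁ ++ List.replicate (M a b) (a, b) ++ L₂ ∧
      L₁.length = rowSumRight M m a b ∧ L₁.countP (·.2 == b) = 0 ∧
      L₂.countP (·.2 == b) = 0 := by
  set col := fun j => List.replicate (M a (j + 1)) (a, j + 1)
  refine ⟨(List.range' b (m - b)).reverse.flatMap col, (List.range (b - 1)).reverse.flatMap col,
    ?_, ?_, ?_, ?_⟩
  · rw [twoLineRow, List.range_eq_append_singleton_append (show b - 1 < m by omega)]
    simp [col, show b - 1 + 1 = b by omega, show m - (b - 1) - 1 = m - b by omega]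
  · rw [rowSumRight, Finset.sum_Ioc_eq_sum_map_range', List.length_flatMap, List.map_reverse,
      List.sum_reverse]
    simp [col]
  · simp only [List.countP_eq_zero, List.mem_flatMap, List.mem_reverse, List.mem_range'_1,
      List.mem_replicate, ne_eq, beq_iff_eq, forall_exists_index, and_imp, Prod.forall,
      Prod.mk.injEq, col]
    omega
  · simp only [List.countP_eq_zero, List.mem_flatMap, List.mem_reverse, List.mem_range,
      List.mem_replicate, ne_eq, beq_iff_eq, forall_exists_index, and_imp, Prod.forall,
      Prod.mk.injEq, col]
    omega

theorem length_flatMap_twoLineRow (n : ℕ) :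
    ((List.range n).flatMap fun i => twoLineRow M m (i + 1)).length = betaM M m n := by
  induction n with
  | zero => simp [betaM_zero]
  | succ n ih => simp [List.range_succ, ih, length_twoLineRow, betaM_succ]

theorem countP_flatMap_twoLineRow {b : ℕ} (hb : 1 ≤ b) (hbm : b ≤ m) (n : ℕ) :
    ((List.range n).flatMap fun i => twoLineRow M m (i + 1)).countP (·.2 == b) =
      ∑ i ∈ Finset.Ioc 0 n, M i b := by
  induction n with
  | zero => simp
  | succ n ih =>
    obtain ⟨L₁, L₂, hrow, -, h₁, h₂⟩ :=
      twoLineRow_eq_append_replicate M m (n + 1) hb hbm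
    rw [List.range_succ, List.flatMap_append, List.countP_append, ih,
      Finset.sum_Ioc_succ_top n.zero_le]
    simp [hrow, h₁, h₂, List.countP_replicate]

theorem length_twoLine : (twoLine M m).length = betaM M m m :=
  length_flatMap_twoLineRow M m m

theorem twoLine_eq_append_replicate {a b : ℕ} (ha : 1 ≤ a) (ham : a ≤ m) (hb : 1 ≤ b)
    (hbm : b ≤ m) :
    ∃ L₁ L₂, twoLine M m = L₁ ++ List.replicate (M a b) (a, b) ++ L₂ ∧
      L₁.length = twoLinePos M m a b 0 ∧ L₁.countP (·.2 == b) = colSumAbove M a b := by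
  obtain ⟨R₁, R₂, hrow, hlen, hcount, -⟩ := twoLineRow_eq_append_replicate M m a hb hbm
  set rows := fun i => twoLineRow M m (i + 1)
  refine ⟨(List.range (a - 1)).flatMap rows ++ R₁,
    R₂ ++ (List.range' a (m - a)).flatMap rows, ?_, ?_, ?_⟩
  · rw [twoLine_eq_flatMap_twoLineRow, List.range_eq_append_singleton_append
      (show a - 1 < m by omega)]
    simp [rows, show a - 1 + 1 = a by omega, show m - (a - 1) - 1 = m - a by omega, hrow]
  · rw [List.length_append, length_flatMap_twoLineRow, hlen, twoLinePos, Nat.add_zero]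
  · rw [List.countP_append, countP_flatMap_twoLineRow M m hb hbm, hcount, colSumAbove,
      Nat.add_zero]

theorem twoLine_getD_twoLinePos {a b t : ℕ} (ha : 1 ≤ a) (ham : a ≤ m) (hb : 1 ≤ b)
    (hbm : b ≤ m) (ht : 1 ≤ t) (htM : t ≤ M a b) :
    (twoLine M m).getD (twoLinePos M m a b t - 1) (0, 0) = (a, b) := by
  obtain ⟨L₁, L₂, hw, hlen, -⟩ := twoLine_eq_append_replicate M m ha ham hb hbm
  rw [hw, show twoLinePos M m a b t - 1 = L₁.length + (t - 1) by
    rw [hlen]; simp only [twoLinePos]; omega]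
  exact List.getD_append_replicate _ _ (by omega)

theorem wstd_twoLinePos {a b t : ℕ} (ha : 1 ≤ a) (ham : a ≤ m) (hb : 1 ≤ b)
    (hbm : b ≤ m) (ht : 1 ≤ t) (htM : t ≤ M a b) :
    wstd M m (twoLinePos M m a b t) = betaM M m b + 1 - (colSumAbove M a b + t) := by
  obtain ⟨L₁, L₂, hw, hlen, hcount⟩ := twoLine_eq_append_replicate M m ha ham hb hbm
  have hpos : twoLinePos M m a b t = L₁.length + t := by rw [hlen]; simp [twoLinePos]
  rw [wstd, twoLine_getD_twoLinePos M m ha ham hb hbm ht htM, ← List.countP_eq_length_filter,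
    hpos, hw, List.countP_take_append_replicate _ _ _ (by simp) htM, hcount]

theorem wstd_twoLinePos_of_symm (hsym : ∀ p q, M p q = M q p) {a b t : ℕ} (ha : 1 ≤ a)
    (ham : a ≤ m) (hb : 1 ≤ b) (hbm : b ≤ m) (ht : 1 ≤ t) (htM : t ≤ M a b) :
    wstd M m (twoLinePos M m a b t) = twoLinePos M m b a (M a b + 1 - t) := by
  rw [wstd_twoLinePos M m ha ham hb hbm ht htM,
    betaM_eq_twoLinePos_add_colSumAbove M m hsym ha ham hb, twoLinePos, twoLinePos]
  omega

theorem wstd_wstd_twoLinePos (hsym : ∀ p q, M p q = M q p) {a b t : ℕ} (ha : 1 ≤ a)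
    (ham : a ≤ m) (hb : 1 ≤ b) (hbm : b ≤ m) (ht : 1 ≤ t) (htM : t ≤ M a b) :
    wstd M m (wstd M m (twoLinePos M m a b t)) = twoLinePos M m a b t := by
  rw [wstd_twoLinePos_of_symm M m hsym ha ham hb hbm ht htM,
    wstd_twoLinePos_of_symm M m hsym hb hbm ha ham (by omega) (by rw [hsym]; omega), hsym b a]
  congr
  omega

theorem wstd_twoLinePos_ne (hsym : ∀ p q, M p q = M q p) (hdiag : ∀ p, 2 ∣ M p p)
    {a b t : ℕ} (ha : 1 ≤ a) (ham : a ≤ m) (hb : 1 ≤ b) (hbm : b ≤ m) (ht : 1 ≤ t)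
    (htM : t ≤ M a b) :
    wstd M m (twoLinePos M m a b t) ≠ twoLinePos M m a b t := by
  rw [wstd_twoLinePos_of_symm M m hsym ha ham hb hbm ht htM]
  intro hfix
  have hentry := congrArg (fun p => (twoLine M m).getD (p - 1) (0, 0)) hfix
  rw [twoLine_getD_twoLinePos M m ha ham hb hbm ht htM,
    twoLine_getD_twoLinePos M m hb hbm ha ham (by omega) (by rw [hsym]; omega),
    Prod.mk.injEq] at hentry
  obtain ⟨-, rfl⟩ := hentry
  simp only [twoLinePos] at hfix
  have := hdiag a
  omega

theorem twoLinePos_le_betaM {a b t : ℕ} (ha : 1 ≤ a) (hb : 1 ≤ b) (hbm : b ≤ m)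
    (htM : t ≤ M a b) : twoLinePos M m a b t ≤ betaM M m a := by
  obtain ⟨i, rfl⟩ : ∃ i, a = i + 1 := ⟨a - 1, by omega⟩
  have hright := rowSumRight_pred M m (i + 1) hb hbm
  have hle := rowSumRight_antitone M m (i + 1) (Nat.zero_le (b - 1))
  rw [rowSumRight_zero] at hle
  rw [twoLinePos, betaM_succ, Nat.add_sub_cancel]
  omega

theorem exists_twoLinePos_eq_of_mem_Ioc {a p : ℕ} (ha : 1 ≤ a)
    (hp : p ∈ Set.Ioc (betaM M m (a - 1)) (betaM M m a)) :
    ∃ b t, 1 ≤ b ∧ b ≤ m ∧ 1 ≤ t ∧ t ≤ M a b ∧ p = twoLinePos M m a b t := by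
  obtain ⟨i, rfl⟩ : ∃ i, a = i + 1 := ⟨a - 1, by omega⟩
  obtain ⟨hlo, hhi⟩ := hp
  rw [Nat.add_sub_cancel] at hlo
  rw [betaM_succ, ← rowSumRight_zero] at hhi
  obtain ⟨k, hk, hlt, hle⟩ :=
    Nat.exists_lt_and_le_succ (fun k => rowSumRight M m (i + 1) (m - k))
    (n := m) (p := p - betaM M m i) (by simp only [Nat.sub_zero, rowSumRight_self]; omega)
    (by simp only [Nat.sub_self]; omega)
  have hpred := rowSumRight_pred M m (i + 1) (b := m - k) (by omega) (by omega)
  rw [show m - k - 1 = m - (k + 1) by omega] at hpred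
  exact ⟨m - k, p - betaM M m i - rowSumRight M m (i + 1) (m - k), by omega, by omega, by omega,
    by omega, by rw [twoLinePos, Nat.add_sub_cancel]; omega⟩

theorem exists_twoLinePos_eq {p : ℕ} (hp : p ∈ Set.Icc 1 (betaM M m m)) :
    ∃ a b t, 1 ≤ a ∧ a ≤ m ∧ 1 ≤ b ∧ b ≤ m ∧ 1 ≤ t ∧ t ≤ M a b ∧
      p = twoLinePos M m a b t := by
  obtain ⟨k, hk, hlt, hle⟩ := Nat.exists_lt_and_le_succ (betaM M m)
    (by rw [betaM_zero]; exact hp.1) hp.2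
  obtain ⟨b, t, hb⟩ := exists_twoLinePos_eq_of_mem_Ioc M m (a := k + 1) (p := p) (by omega)
    ⟨by simpa using hlt, hle⟩
  exact ⟨k + 1, b, t, by omega, by omega, hb⟩

theorem lt_or_eq_and_lt_of_twoLinePos_lt {a b b' t t' : ℕ} (ht : 1 ≤ t) (hb' : 1 ≤ b')
    (hbm' : b' ≤ m) (htM' : t' ≤ M a b')
    (h : twoLinePos M m a b t < twoLinePos M m a b' t') : b' < b ∨ b' = b ∧ t < t' := by
  rcases lt_trichotomy b' b with hlt | rfl | hgt
  · exact Or.inl hlt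
  · exact Or.inr ⟨rfl, by simpa [twoLinePos] using h⟩
  · have hpred := rowSumRight_pred M m a hb' hbm'
    have hle := rowSumRight_antitone M m a (show b ≤ b' - 1 by omega)
    simp only [twoLinePos] at h
    omega

theorem wstd_twoLinePos_lt_of_lt (hsym : ∀ p q, M p q = M q p) {a b b' t t' : ℕ} (ha : 1 ≤ a)
    (ham : a ≤ m) (hb : 1 ≤ b) (hbm : b ≤ m) (ht : 1 ≤ t) (htM : t ≤ M a b)
    (hb' : 1 ≤ b') (hbm' : b' ≤ m) (ht' : 1 ≤ t') (htM' : t' ≤ M a b')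
    (h : twoLinePos M m a b t < twoLinePos M m a b' t') :
    wstd M m (twoLinePos M m a b' t') < wstd M m (twoLinePos M m a b t) := by
  rw [wstd_twoLinePos_of_symm M m hsym ha ham hb hbm ht htM,
    wstd_twoLinePos_of_symm M m hsym ha ham hb' hbm' ht' htM']
  rcases lt_or_eq_and_lt_of_twoLinePos_lt M m ht hb' hbm' htM' h with hlt | ⟨rfl, hlt⟩
  · calc twoLinePos M m b' a (M a b' + 1 - t') ≤ betaM M m b' :=
          twoLinePos_le_betaM M m hb' ha ham (by rw [hsym]; omega)
      _ ≤ betaM M m (b - 1) := betaM_mono M m (by omega)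
      _ < twoLinePos M m b a (M a b + 1 - t) := by simp only [twoLinePos]; omega
  · simp only [twoLinePos]
    omega

end Standardization

theorem standardization_is_involution_general (m : ℕ) (M : ℕ → ℕ → ℕ)
    (hsym : ∀ p q, M p q = M q p) (hdiag : ∀ p, 2 ∣ M p p) :
    (∀ p, 1 ≤ p → p ≤ (twoLine M m).length →
      1 ≤ wstd M m p ∧ wstd M m p ≤ (twoLine M m).length ∧
      wstd M m (wstd M m p) = p ∧ wstd M m p ≠ p) ∧
    (∀ i, 1 ≤ i → i ≤ m → ∀ p, betaM M m (i - 1) + 1 ≤ p → p + 1 ≤ betaM M m i →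
      wstd M m (p + 1) < wstd M m p) := by
  constructor
  · intro p hp1 hp2
    rw [length_twoLine] at hp2 ⊢
    obtain ⟨a, b, t, ha, ham, hb, hbm, ht, htM, rfl⟩ := exists_twoLinePos_eq M m ⟨hp1, hp2⟩
    have hw := wstd_twoLinePos_of_symm M m hsym ha ham hb hbm ht htM
    refine ⟨by rw [hw, twoLinePos]; omega, ?_, wstd_wstd_twoLinePos M m hsym ha ham hb hbm ht htM,
      wstd_twoLinePos_ne M m hsym hdiag ha ham hb hbm ht htM⟩
    rw [hw]
    exact (twoLinePos_le_betaM M m hb ha ham (by rw [hsym]; omega)).trans (betaM_mono M m hbm)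
  · intro i hi him p hp1 hp2
    obtain ⟨b, t, hb, hbm, ht, htM, rfl⟩ :=
      exists_twoLinePos_eq_of_mem_Ioc M m hi (p := p) ⟨by omega, by omega⟩
    obtain ⟨b', t', hb', hbm', ht', htM', hp'⟩ :=
      exists_twoLinePos_eq_of_mem_Ioc M m hi (p := twoLinePos M m i b t + 1) ⟨by omega, hp2⟩
    rw [hp']
    exact wstd_twoLinePos_lt_of_lt M m hsym hi him hb hbm ht htM hb' hbm' ht' htM' (by omega)

/-- for `M ∈ M̂_m`, the standardization of `w_M` is a fixed-point-free
involution of `{1,…,m'}` which is strictly decreasing on each block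
`[β_{i-1}+1, β_i]`. -/
theorem standardization_is_involution (m : ℕ) (hm : 1 ≤ m) (M : ℕ → ℕ → ℕ)
    (hsupp : suppIn M m) (hsym : ∀ p q, M p q = M q p) (hdiag : ∀ p, 2 ∣ M p p) :
    (∀ p, 1 ≤ p → p ≤ (twoLine M m).length →
      1 ≤ wstd M m p ∧ wstd M m p ≤ (twoLine M m).length ∧
      wstd M m (wstd M m p) = p ∧ wstd M m p ≠ p) ∧
    (∀ i, 1 ≤ i → i ≤ m → ∀ p, betaM M m (i - 1) + 1 ≤ p → p + 1 ≤ betaM M m i →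
      wstd M m (p + 1) < wstd M m p) :=
  standardization_is_involution_general m M hsym hdiag

end KingSSOT
end

section
/- Let P be a semistandard Young tableau whose largest entry is x (occurring at least once), and let a be a letter with a < x. Then row-inserting a into the tableau obtained from P by removing the rightmost cell containing x yields the same tableau as first row-inserting a into P and then removing the rightmost cell containing x. -/
open scoped Classical

namespace KingSSOT

/-! Since `x` is the largest entry, it is the last entry of the first row `R` containing it.
Above `R` both sides bump the same letters, all smaller than `x`, which gives an induction on rows.
If the letter arriving at `R` bumps an entry other than `x`, then `x` stays at the end of `R` and
is removed there on both sides. If it bumps `x` itself, then `x` lands at the end of the next row,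
where the removal takes it out again, while removing `x` first lets the letter sit at the end
of `R`. -/

theorem exists_eq_append_of_isChain_of_forall_le {α : Type*} [PartialOrder α] {r : List α}
    {x : α} (hr : r.IsChain (· ≤ ·)) (hx : x ∈ r) (hmax : ∀ y ∈ r, y ≤ x) :
    ∃ r', r = r' ++ [x] := by
  obtain rfl | ⟨r', l, rfl⟩ := List.eq_nil_or_concat' r
  · simp at hx
  refine ⟨r', ?_⟩
  have hl : ∀ y ∈ r', y ≤ l := fun y hy =>
    (List.pairwise_append.1 (List.isChain_iff_pairwise.1 hr)).2.2 y hy l (List.mem_singleton_self l)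
  rcases List.mem_append.1 hx with hx | hx
  · rw [le_antisymm (hl x hx) (hmax l (by simp))]
  · rw [List.mem_singleton.1 hx]

theorem IsSSYT.tail {r : List ℕ} {Q : List (List ℕ)} (h : IsSSYT (r :: Q)) : IsSSYT Q :=
  ⟨fun row hrow => h.1 row (List.mem_cons_of_mem r hrow), h.2.1.tail,
    fun i c hc => h.2.2 (i + 1) c hc⟩

theorem IsSSYT.ne_nil {Q : List (List ℕ)} (h : IsSSYT Q) {row : List ℕ} (hrow : row ∈ Q) :
    row ≠ [] :=
  (h.1 row hrow).1

theorem IsSSYT.eq_nil_of_forall_le_getD_zero {r : List ℕ} {Q : List (List ℕ)}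
    (h : IsSSYT (r :: Q)) (hmax : ∀ row ∈ Q, ∀ y ∈ row, y ≤ r.getD 0 0) : Q = [] := by
  cases Q with
  | nil => rfl
  | cons s Q =>
    have hs : 0 < s.length := List.length_pos_of_ne_nil (h.ne_nil (by simp))
    have hlt : r.getD 0 0 < s.getD 0 0 := h.2.2 0 0 hs
    have hmem : s.getD 0 0 ∈ s := by
      rw [List.getD_eq_getElem _ _ hs]
      exact List.getElem_mem hs
    exact absurd (hmax s List.mem_cons_self _ hmem) (not_le.2 hlt)

theorem rowInsert_cons_of_findIdx?_eq_none {r : List ℕ} {Q : List (List ℕ)} {a : ℕ}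
    (h : r.findIdx? (a < ·) = none) : rowInsert (r :: Q) a = (r ++ [a]) :: Q := by
  rw [rowInsert, h]

theorem rowInsert_cons_of_findIdx?_eq_some {r : List ℕ} {Q : List (List ℕ)} {a k : ℕ}
    (h : r.findIdx? (a < ·) = some k) :
    rowInsert (r :: Q) a = r.set k a :: rowInsert Q (r.getD k 0) := by
  rw [rowInsert, h]

theorem ne_nil_of_mem_rowInsert {Q : List (List ℕ)} (hQ : ∀ row ∈ Q, row ≠ []) (a : ℕ) :
    ∀ row ∈ rowInsert Q a, row ≠ [] := by
  induction Q generalizing a with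
  | nil => simp [rowInsert]
  | cons r Q ih =>
    have hr := hQ r List.mem_cons_self
    have hQ' := fun row h => hQ row (List.mem_cons_of_mem r h)
    cases hk : r.findIdx? (a < ·) with
    | none =>
      rw [rowInsert_cons_of_findIdx?_eq_none hk]
      simpa using hQ'
    | some k =>
      rw [rowInsert_cons_of_findIdx?_eq_some hk]
      simpa [List.set_eq_nil_iff, hr] using ih hQ' (r.getD k 0)

theorem removeRM_singleton (x : ℕ) : removeRM x [[x]] = [] := by
  simp [removeRM]

theorem removeRM_cons_of_not_mem {x : ℕ} {r : List ℕ} {Q : List (List ℕ)} (hx : x ∉ r)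
    (hr : r ≠ []) : removeRM x (r :: Q) = r :: removeRM x Q := by
  simp [removeRM, List.findIdx_cons, hx, hr]

theorem removeRM_append_singleton_cons {x : ℕ} {r : List ℕ} {Q : List (List ℕ)} (hr : r ≠ [])
    (hQ : ∀ row ∈ Q, row ≠ []) : removeRM x ((r ++ [x]) :: Q) = r :: Q := by
  simpa [removeRM, List.findIdx_cons, hr] using hQ

theorem removeRM_rowInsert_of_forall_le {x : ℕ} {Q : List (List ℕ)} (hQ : ∀ row ∈ Q, row ≠ [])
    (hmax : ∀ row ∈ Q, ∀ y ∈ row, y ≤ x) : removeRM x (rowInsert Q x) = Q := by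
  cases Q with
  | nil => exact removeRM_singleton x
  | cons s Q =>
    have hk : s.findIdx? (x < ·) = none := by
      simpa [List.findIdx?_eq_none_iff] using hmax s List.mem_cons_self
    rw [rowInsert_cons_of_findIdx?_eq_none hk,
      removeRM_append_singleton_cons (hQ s List.mem_cons_self)
        fun row h => hQ row (List.mem_cons_of_mem s h)]

theorem rowInsert_removeRM_append_singleton_cons_of_findIdx?_eq_some {x a k : ℕ}
    {r : List ℕ} {Q : List (List ℕ)} (hQ : ∀ row ∈ Q, row ≠ [])
    (hk : r.findIdx? (a < ·) = some k) :
    rowInsert (removeRM x ((r ++ [x]) :: Q)) a = removeRM x (rowInsert ((r ++ [x]) :: Q) a) := by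
  have hkr : k < r.length := (List.findIdx?_eq_some_iff_getElem.1 hk).1
  have hr : r ≠ [] := List.ne_nil_of_length_pos (by omega)
  have hk' : (r ++ [x]).findIdx? (a < ·) = some k := by simp [hk]
  have hset : (r ++ [x]).set k a = r.set k a ++ [x] := List.set_append_left k a hkr
  have hbump : (r ++ [x]).getD k 0 = r.getD k 0 := List.getD_append r [x] 0 k hkr
  rw [removeRM_append_singleton_cons hr hQ, rowInsert_cons_of_findIdx?_eq_some hk,
    rowInsert_cons_of_findIdx?_eq_some hk', hset, hbump,
    removeRM_append_singleton_cons (by simpa [List.set_eq_nil_iff] using hr)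
      (ne_nil_of_mem_rowInsert hQ _)]

theorem rowInsert_removeRM_append_singleton_cons_of_findIdx?_eq_none {x a : ℕ}
    {r : List ℕ} {Q : List (List ℕ)} (hP : IsSSYT ((r ++ [x]) :: Q))
    (hmax : ∀ row ∈ Q, ∀ y ∈ row, y ≤ x) (ha : a < x) (hk : r.findIdx? (a < ·) = none) :
    rowInsert (removeRM x ((r ++ [x]) :: Q)) a = removeRM x (rowInsert ((r ++ [x]) :: Q) a) := by
  have hQ : ∀ row ∈ Q, row ≠ [] := fun _ => hP.tail.ne_nil
  have hle : ∀ y ∈ r, y ≤ a := by simpa [List.findIdx?_eq_none_iff] using hk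
  have hk' : (r ++ [x]).findIdx? (a < ·) = some r.length := by simp [hk, ha]
  have hxr : x ∉ r ++ [a] := by
    simp only [List.mem_append, List.mem_singleton, not_or]
    exact ⟨fun hx => (hle x hx).not_gt ha, ha.ne'⟩
  rw [rowInsert_cons_of_findIdx?_eq_some hk', List.set_append_right _ _ le_rfl,
    List.getD_append_right _ _ _ _ le_rfl, Nat.sub_self]
  simp only [List.set_cons_zero, List.getD_cons_zero]
  rw [removeRM_cons_of_not_mem hxr (by simp),
    removeRM_rowInsert_of_forall_le hQ hmax]
  rcases eq_or_ne r [] with rfl | hr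
  · obtain rfl : Q = [] := hP.eq_nil_of_forall_le_getD_zero hmax
    simp only [List.nil_append, removeRM_singleton, rowInsert]
  · rw [removeRM_append_singleton_cons hr hQ,
      rowInsert_cons_of_findIdx?_eq_none hk]

theorem rowInsert_removeRM_cons_of_not_mem {x a : ℕ} {r : List ℕ} {Q : List (List ℕ)}
    (hr : r ≠ []) (hxr : x ∉ r) (hmax : ∀ y ∈ r, y ≤ x) (ha : a < x)
    (ih : ∀ c < x, rowInsert (removeRM x Q) c = removeRM x (rowInsert Q c)) :
    rowInsert (removeRM x (r :: Q)) a = removeRM x (rowInsert (r :: Q) a) := by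
  rw [removeRM_cons_of_not_mem hxr hr]
  cases hk : r.findIdx? (a < ·) with
  | none =>
    have hxr' : x ∉ r ++ [a] := by simp [hxr, ha.ne']
    rw [rowInsert_cons_of_findIdx?_eq_none hk, rowInsert_cons_of_findIdx?_eq_none hk,
      removeRM_cons_of_not_mem hxr' (by simp)]
  | some k =>
    have hkr : k < r.length := (List.findIdx?_eq_some_iff_getElem.1 hk).1
    have hbump : r.getD k 0 ∈ r := by
      rw [List.getD_eq_getElem _ _ hkr]
      exact List.getElem_mem hkr
    have hc : r.getD k 0 < x := (hmax _ hbump).lt_of_ne fun h => hxr (h ▸ hbump)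
    have hxr' : x ∉ r.set k a := fun hx =>
      (List.mem_or_eq_of_mem_set hx).elim hxr ha.ne'
    rw [rowInsert_cons_of_findIdx?_eq_some hk, rowInsert_cons_of_findIdx?_eq_some hk,
      removeRM_cons_of_not_mem hxr' (by simpa [List.set_eq_nil_iff] using hr), ih _ hc]

theorem rowInsert_comm_removeRM_general (P : List (List ℕ)) (x a : ℕ)
    (hP : IsSSYT P) (hmax : ∀ row ∈ P, ∀ y ∈ row, y ≤ x)
    (ha : a < x) :
    rowInsert (removeRM x P) a = removeRM x (rowInsert P a) := by
  induction P generalizing a with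
  | nil => simp [removeRM, rowInsert, ha.ne']
  | cons r Q ih =>
    obtain ⟨hr, hr_sorted⟩ := hP.1 r List.mem_cons_self
    have hmaxQ : ∀ row ∈ Q, ∀ y ∈ row, y ≤ x := fun row h => hmax row (List.mem_cons_of_mem r h)
    by_cases hxr : x ∈ r
    · obtain ⟨r, rfl⟩ :=
        exists_eq_append_of_isChain_of_forall_le hr_sorted hxr (hmax _ List.mem_cons_self)
      cases hk : r.findIdx? (a < ·) with
      | none =>
        exact rowInsert_removeRM_append_singleton_cons_of_findIdx?_eq_none hP hmaxQ ha hk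
      | some k =>
        exact rowInsert_removeRM_append_singleton_cons_of_findIdx?_eq_some
          (fun _ => hP.tail.ne_nil) hk
    · exact rowInsert_removeRM_cons_of_not_mem hr hxr (hmax r List.mem_cons_self) ha
        fun c hc => ih c hP.tail hmaxQ hc

/-- Lemma `vp` key step: if `x` is the largest entry of a semistandard
tableau `P` and `a < x`, then row-inserting `a` commutes with removing the rightmost cell
containing `x`. -/
theorem rowInsert_comm_removeRM (P : List (List ℕ)) (x a : ℕ)
    (hP : IsSSYT P) (hmax : ∀ row ∈ P, ∀ y ∈ row, y ≤ x)
    (hocc : ∃ row ∈ P, x ∈ row) (ha : a < x) :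
    rowInsert (removeRM x P) a = removeRM x (rowInsert P a) :=
  rowInsert_comm_removeRM_general P x a hP hmax ha

end KingSSOT
end
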